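/- arXiv:1712.01301 — 6 statements merged into one kernel-verified Lean document; each statement's English description precedes it below -/
import Mathlib

section
/- For all reals x, y with 0 ≤ x ≤ 3 − 2√2 and 0 < y ≤ 3 − 2√2, setting D(t) := (1 + t − √(t² − 6t + 1))/4, one has 1 − 2·D(y) ≠ 0 and the identity (1/2)·( D(x) + D(y)·(x/y) + (2·D(y)²·(x/y) + D(y)) / (1 − 2·D(y)) ) = (1/8)·(1 + x − √(x² − 6x + 1)) + (1/(8y²))·(x + y)·(1 − 3y − √(y² − 6y + 1)). -/
/-! The `y`-part of the left-hand side is a rational function of `d = D(y)`, and `d` is the root of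
`2d² − (1 + y)d + y = 0` (squaring `√(y² − 6y + 1) = 1 + y − 4d`). Reducing modulo this quadratic
turns the left-hand side into `(x + y)(d − y)/(2y²)`, which is the right-hand side after substituting
`4d = 1 + y − √(y² − 6y + 1)`. The `x`-square-root enters both sides only through `D(x)`. -/

open Real

lemma sq_sub_six_mul_add_one_nonneg {t : ℝ} (ht : t ≤ 3 - 2 * √2) :
    0 ≤ t ^ 2 - 6 * t + 1 := by
  have h2 : √2 ^ 2 = 2 := sq_sqrt (by norm_num)
  have : t ^ 2 - 6 * t + 1 = (3 - 2 * √2 - t) * (3 + 2 * √2 - t) := by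
    linear_combination 4 * h2
  rw [this]
  exact mul_nonneg (by linarith) (by linarith [sqrt_nonneg 2])

lemma lt_one_of_le_three_sub_two_mul_sqrt_two {t : ℝ} (ht : t ≤ 3 - 2 * √2) : t < 1 := by
  have : (1 : ℝ) < √2 := by
    rw [show (1 : ℝ) = √1 by simp]
    exact sqrt_lt_sqrt zero_le_one one_lt_two
  linarith

lemma quadratic_root_of_sq_eq {t b : ℝ} (hb : b ^ 2 = t ^ 2 - 6 * t + 1) :
    2 * ((1 + t - b) / 4) ^ 2 - (1 + t) * ((1 + t - b) / 4) + t = 0 := by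
  linear_combination hb / 8

lemma div_add_div_one_sub_two_mul_eq {d x y : ℝ} (hy : y ≠ 0) (hd : 1 - 2 * d ≠ 0)
    (hquad : 2 * d ^ 2 - (1 + y) * d + y = 0) :
    d * (x / y) + (2 * d ^ 2 * (x / y) + d) / (1 - 2 * d) = (x + y) * (d - y) / y ^ 2 := by
  rw [eq_div_iff (pow_ne_zero 2 hy), add_mul, div_mul_eq_mul_div, eq_comm, ← sub_eq_iff_eq_add',
    eq_div_iff hd]
  field_simp
  linear_combination -(x + y) * hquad

theorem cycleIndex_outerplanar_blocks_general (x y : ℝ)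
    (hy0 : 0 < y) (hy1 : y ≤ 3 - 2 * Real.sqrt 2)
    (D : ℝ → ℝ) (hD : ∀ t, D t = (1 + t - Real.sqrt (t ^ 2 - 6 * t + 1)) / 4) :
    1 - 2 * D y ≠ 0 ∧
    (1 / 2) * (D x + D y * (x / y) + (2 * (D y) ^ 2 * (x / y) + D y) / (1 - 2 * D y))
      = (1 / 8) * (1 + x - Real.sqrt (x ^ 2 - 6 * x + 1))
        + (1 / (8 * y ^ 2)) * (x + y) * (1 - 3 * y - Real.sqrt (y ^ 2 - 6 * y + 1)) := by
  set b := √(y ^ 2 - 6 * y + 1)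
  have hb : b ^ 2 = y ^ 2 - 6 * y + 1 := sq_sqrt (sq_sub_six_mul_add_one_nonneg hy1)
  have hDy : D y = (1 + y - b) / 4 := hD y
  have hden : 1 - 2 * D y ≠ 0 := by
    have := lt_one_of_le_three_sub_two_mul_sqrt_two hy1
    rw [hDy]
    exact (by linarith [sqrt_nonneg (y ^ 2 - 6 * y + 1)] : 0 < 1 - 2 * ((1 + y - b) / 4)).ne'
  have hquad : 2 * D y ^ 2 - (1 + y) * D y + y = 0 := hDy ▸ quadratic_root_of_sq_eq hb
  refine ⟨hden, ?_⟩
  rw [add_assoc, div_add_div_one_sub_two_mul_eq hy0.ne' hden hquad, hD x, hDy]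
  field_simp
  ring

/-- For all reals `x, y` with `0 ≤ x ≤ 3 − 2√2` and `0 < y ≤ 3 − 2√2`, setting
`D(t) = (1 + t − √(t² − 6t + 1))/4`, one has `1 − 2·D(y) ≠ 0` and the identity
`(1/2)·(D(x) + D(y)·(x/y) + (2·D(y)²·(x/y) + D(y))/(1 − 2·D(y)))
  = (1/8)·(1 + x − √(x² − 6x + 1)) + (1/(8y²))·(x + y)·(1 − 3y − √(y² − 6y + 1))`. -/
theorem cycleIndex_outerplanar_blocks (x y : ℝ)
    (hx0 : 0 ≤ x) (hx1 : x ≤ 3 - 2 * Real.sqrt 2)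
    (hy0 : 0 < y) (hy1 : y ≤ 3 - 2 * Real.sqrt 2)
    (D : ℝ → ℝ) (hD : ∀ t, D t = (1 + t - Real.sqrt (t ^ 2 - 6 * t + 1)) / 4) :
    1 - 2 * D y ≠ 0 ∧
    (1 / 2) * (D x + D y * (x / y) + (2 * (D y) ^ 2 * (x / y) + D y) / (1 - 2 * D y))
      = (1 / 8) * (1 + x - Real.sqrt (x ^ 2 - 6 * x + 1))
        + (1 / (8 * y ^ 2)) * (x + y) * (1 - 3 * y - Real.sqrt (y ^ 2 - 6 * y + 1)) :=
  cycleIndex_outerplanar_blocks_general x y hy0 hy1 D hD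
end

section
/- Let w be a real number, let M(w) be the 3×3 real matrix with rows (2w⁴−4w³+3w−1, −w³+w², w³−2w²+w), (−w³+w², 2w⁴−4w³+3w−1, w³−2w²+w), (−w²+w, −w²+w, 2w⁴−4w³+w²+2w−1), and let b(w) := (2w⁴−4w³−w²+3w−1, −w, −w²). If det M(w) ≠ 0 and v ∈ ℝ³ satisfies M(w)·v = b(w), then the first coordinate v₁ of v satisfies v₁·(4w³−6w²−2w+1)·(2w−1) = 8w⁴−16w³+4w−1; in particular, if moreover (4w³−6w²−2w+1)(2w−1) ≠ 0, then v₁ = (8w⁴−16w³+4w−1)/((4w³−6w²−2w+1)(2w−1)). -/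
/-!
By Cramer's rule, `v₀ · det M = det M₀`, where `M₀` is `M` with its first column replaced by `b`.
Both determinants factor through the same degree-8 polynomial in `w`, which is nonzero because
`det M ≠ 0`; cancelling it leaves `v₀ · (4w³ - 6w² - 2w + 1)(2w - 1) = 8w⁴ - 16w³ + 4w - 1`.
-/

open Matrix

theorem Matrix.det_updateCol_mulVec {n R : Type*} [Fintype n] [DecidableEq n] [CommRing R]
    (A : Matrix n n R) (j : n) (v : n → R) :
    (A.updateCol j (A *ᵥ v)).det = v j * A.det := by
  have hcols : A *ᵥ v = fun k ↦ ∑ i, v i • A k i := by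
    ext k
    simp only [mulVec, dotProduct, smul_eq_mul, mul_comm]
  rw [hcols, det_updateCol_sum, smul_eq_mul]

section MarkedDissection

variable (w : ℝ)

def dissectionMatrix : Matrix (Fin 3) (Fin 3) ℝ :=
  !![2*w^4 - 4*w^3 + 3*w - 1, -w^3 + w^2, w^3 - 2*w^2 + w;
     -w^3 + w^2, 2*w^4 - 4*w^3 + 3*w - 1, w^3 - 2*w^2 + w;
     -w^2 + w, -w^2 + w, 2*w^4 - 4*w^3 + w^2 + 2*w - 1]

def dissectionRHS : Fin 3 → ℝ :=
  ![2*w^4 - 4*w^3 - w^2 + 3*w - 1, -w, -w^2]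

def dissectionCommonFactor : ℝ :=
  w^8 - 4*w^7 + 4*w^6 + 4*w^5 - 10*w^4 + 4*w^3 + 4*w^2 - 4*w + 1

theorem det_dissectionMatrix :
    (dissectionMatrix w).det =
      dissectionCommonFactor w * ((4*w^3 - 6*w^2 - 2*w + 1) * (2*w - 1)) := by
  rw [det_fin_three, dissectionMatrix, dissectionCommonFactor]
  simp only [Fin.isValue, of_apply, cons_val', cons_val_zero, cons_val_fin_one, cons_val_one,
    cons_val]
  ring

theorem det_dissectionMatrix_updateCol_zero :
    ((dissectionMatrix w).updateCol 0 (dissectionRHS w)).det =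
      dissectionCommonFactor w * (8*w^4 - 16*w^3 + 4*w - 1) := by
  rw [det_fin_three, dissectionMatrix, dissectionRHS, dissectionCommonFactor]
  simp only [Fin.isValue, updateCol_self, ne_eq, one_ne_zero, not_false_eq_true, updateCol_ne,
    of_apply, cons_val', cons_val_zero, cons_val_one, cons_val_fin_one, Fin.reduceEq, cons_val]
  ring

end MarkedDissection

/-- Closed-form solution for the first unknown of the linear system determining
the expected distance `E[η₀']` between the two marked vertices of a
Boltzmann-distributed marked dissection. -/
theorem marked_dissection_linear_system (w : ℝ)
    (M : Matrix (Fin 3) (Fin 3) ℝ)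
    (hM : M = !![2*w^4 - 4*w^3 + 3*w - 1, -w^3 + w^2, w^3 - 2*w^2 + w;
                 -w^3 + w^2, 2*w^4 - 4*w^3 + 3*w - 1, w^3 - 2*w^2 + w;
                 -w^2 + w, -w^2 + w, 2*w^4 - 4*w^3 + w^2 + 2*w - 1])
    (b : Fin 3 → ℝ)
    (hb : b = ![2*w^4 - 4*w^3 - w^2 + 3*w - 1, -w, -w^2])
    (hdet : M.det ≠ 0)
    (v : Fin 3 → ℝ) (hv : M.mulVec v = b) :
    v 0 * ((4*w^3 - 6*w^2 - 2*w + 1) * (2*w - 1)) = 8*w^4 - 16*w^3 + 4*w - 1 ∧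
    ((4*w^3 - 6*w^2 - 2*w + 1) * (2*w - 1) ≠ 0 →
      v 0 = (8*w^4 - 16*w^3 + 4*w - 1) / ((4*w^3 - 6*w^2 - 2*w + 1) * (2*w - 1))) := by
  change M = dissectionMatrix w at hM
  change b = dissectionRHS w at hb
  subst hM hb
  have hcramer := (dissectionMatrix w).det_updateCol_mulVec 0 v
  rw [hv, det_dissectionMatrix_updateCol_zero, det_dissectionMatrix] at hcramer
  have hcommon : dissectionCommonFactor w ≠ 0 := by
    rw [det_dissectionMatrix] at hdet
    exact left_ne_zero_of_mul hdet
  have hv0 : v 0 * ((4*w^3 - 6*w^2 - 2*w + 1) * (2*w - 1)) = 8*w^4 - 16*w^3 + 4*w - 1 :=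
    mul_left_cancel₀ hcommon (by rw [hcramer]; ring)
  exact ⟨hv0, fun hden ↦ eq_div_of_mul_eq hden hv0⟩
end

section
/- Let ρ > 0 and c > 0, and let (a_n)_{n≥0}, (b_n)_{n≥0} be sequences of nonnegative reals such that a_n·n^{3/2}·ρ^n → c as n → ∞ and such that Σ_{n≥0} b_n·r^n < ∞ for some r > ρ. Then the convolution s_n := Σ_{k=0}^{n} a_{n−k}·b_k satisfies s_n·n^{3/2}·ρ^n → c·Σ_{k≥0} b_k·ρ^k as n → ∞. -/
open Filter Topology Asymptotics Finset

/-!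
Normalise by `ρ`: with `u n = a n ρ^n` and `v k = b k ρ^k` the claim is that
`n^{3/2} Σ_{k ≤ n} u (n-k) v k → c Σ v k`. Each term converges to `c v k`, because
`(n - k)^{3/2} ~ n^{3/2}` for fixed `k`. Since `n + 1 ≤ (n - k + 1)(k + 1)`, the `k`-th term is
dominated by a constant times `(k+1)^{3/2} |v k|` uniformly in `n`, and this moment series converges as
`v k = b k r^k (ρ/r)^k` decays geometrically. Tannery's theorem finishes the proof.
-/

theorem tendsto_mul_add_rpow_of_tendsto_mul_rpow {α c : ℝ} {u : ℕ → ℝ}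
    (hu : Tendsto (fun n => u n * (n : ℝ) ^ α) atTop (𝓝 c)) (x : ℝ) :
    Tendsto (fun n => u n * ((n : ℝ) + x) ^ α) atTop (𝓝 c) := by
  have hx : (fun n : ℕ => (n : ℝ) + x) ~[atTop] (fun n => (n : ℝ)) :=
    IsEquivalent.refl.add_isLittleO
      ((isLittleO_const_id_atTop x).comp_tendsto tendsto_natCast_atTop_atTop)
  have hxα := hx.rpow (fun n => Nat.cast_nonneg n) (r := α)
  exact ((IsEquivalent.refl (u := u)).mul hxα).symm.tendsto_nhds hu

theorem tendsto_sub_mul_rpow_of_tendsto_mul_rpow {α c : ℝ} {u : ℕ → ℝ}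
    (hu : Tendsto (fun n => u n * (n : ℝ) ^ α) atTop (𝓝 c)) (k : ℕ) :
    Tendsto (fun n => u (n - k) * (n : ℝ) ^ α) atTop (𝓝 c) := by
  rw [← tendsto_add_atTop_iff_nat k]
  simpa only [Nat.add_sub_cancel, Nat.cast_add] using
    tendsto_mul_add_rpow_of_tendsto_mul_rpow hu k

theorem exists_abs_mul_add_one_rpow_le {α c : ℝ} {u : ℕ → ℝ}
    (hu : Tendsto (fun n => u n * (n : ℝ) ^ α) atTop (𝓝 c)) :
    ∃ M, ∀ n, |u n| * ((n : ℝ) + 1) ^ α ≤ M := by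
  obtain ⟨M, hM⟩ := (tendsto_mul_add_rpow_of_tendsto_mul_rpow hu 1).abs.bddAbove_range
  refine ⟨M, fun n => ?_⟩
  rw [← abs_of_nonneg (Real.rpow_nonneg (by positivity) α : 0 ≤ ((n : ℝ) + 1) ^ α), ← abs_mul]
  exact hM ⟨n, rfl⟩

theorem natCast_rpow_le_sub_add_one_rpow_mul {α : ℝ} (hα : 0 ≤ α) {n k : ℕ} (hk : k ≤ n) :
    (n : ℝ) ^ α ≤ (((n - k : ℕ) : ℝ) + 1) ^ α * ((k : ℝ) + 1) ^ α := by
  rw [← Real.mul_rpow (by positivity) (by positivity)]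
  refine Real.rpow_le_rpow (Nat.cast_nonneg n) ?_ hα
  obtain ⟨m, rfl⟩ := Nat.exists_eq_add_of_le hk
  rw [Nat.add_sub_cancel_left, Nat.cast_add]
  nlinarith [(Nat.cast_nonneg k : (0 : ℝ) ≤ k), (Nat.cast_nonneg m : (0 : ℝ) ≤ m)]

theorem tendsto_convolution_mul_rpow {α c : ℝ} (hα : 0 ≤ α) {u v : ℕ → ℝ}
    (hu : Tendsto (fun n => u n * (n : ℝ) ^ α) atTop (𝓝 c))
    (hv : Summable fun k : ℕ => ((k : ℝ) + 1) ^ α * |v k|) :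
    Tendsto (fun n => (∑ k ∈ range (n + 1), u (n - k) * v k) * (n : ℝ) ^ α)
      atTop (𝓝 (c * ∑' k, v k)) := by
  obtain ⟨M, hM⟩ := exists_abs_mul_add_one_rpow_le hu
  have hM0 : 0 ≤ M := (mul_nonneg (abs_nonneg _) (by positivity)).trans (hM 0)
  set f : ℕ → ℕ → ℝ := fun n k => if k ≤ n then u (n - k) * (n : ℝ) ^ α * v k else 0
  have hsum (n : ℕ) : (∑ k ∈ range (n + 1), u (n - k) * v k) * (n : ℝ) ^ α = ∑' k, f n k := by
    rw [tsum_eq_sum (s := range (n + 1)) fun k hk => if_neg (by simpa [Nat.lt_succ_iff] using hk),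
      sum_mul]
    refine sum_congr rfl fun k hk => ?_
    rw [if_pos (Nat.lt_succ_iff.mp (mem_range.mp hk))]
    ring
  have hlim (k : ℕ) : Tendsto (f · k) atTop (𝓝 (c * v k)) :=
    ((tendsto_sub_mul_rpow_of_tendsto_mul_rpow hu k).mul_const (v k)).congr'
      ((eventually_ge_atTop k).mono fun n hn => (if_pos hn).symm)
  have hbound (n k : ℕ) : ‖f n k‖ ≤ M * (((k : ℝ) + 1) ^ α * |v k|) := by
    by_cases hk : k ≤ n
    · calc ‖f n k‖ = |u (n - k)| * (n : ℝ) ^ α * |v k| := by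
            simp only [f, if_pos hk, Real.norm_eq_abs, abs_mul,
              abs_of_nonneg (Real.rpow_nonneg (Nat.cast_nonneg n) α)]
        _ ≤ |u (n - k)| * ((((n - k : ℕ) : ℝ) + 1) ^ α * ((k : ℝ) + 1) ^ α) * |v k| := by
            gcongr; exact natCast_rpow_le_sub_add_one_rpow_mul hα hk
        _ = |u (n - k)| * (((n - k : ℕ) : ℝ) + 1) ^ α * (((k : ℝ) + 1) ^ α * |v k|) := by ring
        _ ≤ M * (((k : ℝ) + 1) ^ α * |v k|) := by gcongr; exact hM _
    · simp only [f, if_neg hk, norm_zero]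
      positivity
  simpa only [hsum, tsum_mul_left] using
    tendsto_tsum_of_dominated_convergence (hv.mul_left M) hlim (.of_forall hbound)

theorem summable_add_one_rpow_mul_abs_mul_pow (α : ℝ) {ρ r : ℝ} {w : ℕ → ℝ} (hρ : 0 ≤ ρ)
    (hρr : ρ < r) (hw : Summable fun k => w k * r ^ k) :
    Summable fun k : ℕ => ((k : ℝ) + 1) ^ α * |w k * ρ ^ k| := by
  have hr : 0 < r := hρ.trans_lt hρr
  set q := ρ / r
  have hq0 : 0 ≤ q := by positivity
  have hq : ‖q‖ < 1 := by
    rw [Real.norm_eq_abs, abs_of_nonneg hq0, div_lt_one hr]; exact hρr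
  obtain ⟨C, hC⟩ := hw.tendsto_atTop_zero.abs.bddAbove_range
  have hC0 : 0 ≤ C := (abs_nonneg _).trans (hC ⟨0, rfl⟩)
  set N := ⌈α⌉₊
  refine (summable_descFactorial_mul_geometric_of_norm_lt_one N hq |>.mul_left C).of_nonneg_of_le
    (fun k => by positivity) fun k => ?_
  have hpow : ((k : ℝ) + 1) ^ α ≤ ((k + N).descFactorial N : ℝ) :=
    calc ((k : ℝ) + 1) ^ α ≤ ((k : ℝ) + 1) ^ (N : ℝ) :=
          Real.rpow_le_rpow_of_exponent_le (by linarith [(Nat.cast_nonneg k : (0 : ℝ) ≤ k)])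
            (Nat.le_ceil α)
      _ = ((k + 1) ^ N : ℕ) := by norm_cast
      _ ≤ ((k + N).descFactorial N : ℝ) := by
          have h := Nat.pow_sub_le_descFactorial (k + N) N
          rw [Nat.add_right_comm, Nat.add_sub_cancel] at h
          exact_mod_cast h
  have hwq : |w k * ρ ^ k| = |w k * r ^ k| * q ^ k := by
    rw [div_pow, abs_mul, abs_mul, abs_of_nonneg (pow_nonneg hρ k),
      abs_of_nonneg (pow_nonneg hr.le k)]
    field_simp
  rw [hwq]
  calc ((k : ℝ) + 1) ^ α * (|w k * r ^ k| * q ^ k)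
      ≤ ((k + N).descFactorial N : ℝ) * (C * q ^ k) := by
        gcongr
        exact hC ⟨k, rfl⟩
    _ = C * (((k + N).descFactorial N : ℝ) * q ^ k) := by ring

theorem sum_range_sub_mul_mul_pow {R : Type*} [CommSemiring R] (x y : ℕ → R) (ρ : R) (n : ℕ) :
    (∑ k ∈ range (n + 1), x (n - k) * y k) * ρ ^ n =
      ∑ k ∈ range (n + 1), x (n - k) * ρ ^ (n - k) * (y k * ρ ^ k) := by
  rw [sum_mul]
  refine sum_congr rfl fun k hk => ?_
  rw [← pow_sub_mul_pow ρ (Nat.lt_succ_iff.mp (mem_range.mp hk))]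
  ring

theorem convolution_asymptotics_general (ρ c : ℝ) (hρ : 0 < ρ)
    (a b : ℕ → ℝ)
    (ha : Tendsto (fun n : ℕ => a n * (n : ℝ) ^ ((3 : ℝ) / 2) * ρ ^ n)
      atTop (nhds c))
    (hb : ∃ r : ℝ, ρ < r ∧ Summable (fun n : ℕ => b n * r ^ n)) :
    Tendsto (fun n : ℕ =>
        (∑ k ∈ Finset.range (n + 1), a (n - k) * b k)
          * (n : ℝ) ^ ((3 : ℝ) / 2) * ρ ^ n)
      atTop (nhds (c * ∑' k : ℕ, b k * ρ ^ k)) := by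
  obtain ⟨r, hρr, hbr⟩ := hb
  have hu : Tendsto (fun n : ℕ => a n * ρ ^ n * (n : ℝ) ^ ((3 : ℝ) / 2)) atTop (𝓝 c) := by
    refine ha.congr fun n => ?_
    ring
  have hv := summable_add_one_rpow_mul_abs_mul_pow ((3 : ℝ) / 2) hρ.le hρr hbr
  refine (tendsto_convolution_mul_rpow (by norm_num) hu hv).congr fun n => ?_
  rw [mul_right_comm, sum_range_sub_mul_mul_pow]

/-- Transfer of square-root-type asymptotics through a convolution with a
series of strictly larger radius of convergence: if `a_n·n^{3/2}·ρ^n → c` and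
`Σ b_n·r^n < ∞` for some `r > ρ`, then the convolution
`s_n = Σ_{k=0}^{n} a_{n−k}·b_k` satisfies
`s_n·n^{3/2}·ρ^n → c·Σ_{k≥0} b_k·ρ^k`. -/
theorem convolution_asymptotics (ρ c : ℝ) (hρ : 0 < ρ) (hc : 0 < c)
    (a b : ℕ → ℝ) (ha0 : ∀ n, 0 ≤ a n) (hb0 : ∀ n, 0 ≤ b n)
    (ha : Tendsto (fun n : ℕ => a n * (n : ℝ) ^ ((3 : ℝ) / 2) * ρ ^ n)
      atTop (nhds c))
    (hb : ∃ r : ℝ, ρ < r ∧ Summable (fun n : ℕ => b n * r ^ n)) :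
    Tendsto (fun n : ℕ =>
        (∑ k ∈ Finset.range (n + 1), a (n - k) * b k)
          * (n : ℝ) ^ ((3 : ℝ) / 2) * ρ ^ n)
      atTop (nhds (c * ∑' k : ℕ, b k * ρ ^ k)) :=
  convolution_asymptotics_general ρ c hρ a b ha hb
end

section
/- Let ρ > 0 and c > 0, and let (a_n)_{n≥0}, (b_n)_{n≥0} be sequences of nonnegative reals such that a_n·n^{3/2}·ρ^n → c as n → ∞ and such that Σ_{n≥0} b_n·r^n < ∞ for some r > ρ, and assume Σ_{k≥0} b_k·ρ^k > 0. Then for every fixed k ≥ 0, the ratio (a_{n−k}·b_k) / (Σ_{j=0}^{n} a_{n−j}·b_j) converges, as n → ∞, to (ρ^k·b_k) / (Σ_{j≥0} ρ^j·b_j). In particular these limits sum to 1 over k, so the index distribution given by these ratios converges weakly to the Boltzmann-type distribution with weights proportional to ρ^k·b_k. -/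
/-!
Write `a n ≈ c n^(-3/2) ρ^(-n)`. Then `a (n - j) / a n → ρ ^ j` for each fixed `j`, and since
`n ≤ (n - j + 1) (j + 1)` this ratio is bounded by `C (j + 1)^(3/2) ρ ^ j` uniformly in `n`; the
bound is summable against `b j` because `ρ < r`. Tannery's theorem then gives
`(∑_{j ≤ n} a (n - j) b j) / a n → ∑ ρ ^ j b j`, and dividing by this limit gives the claim.
-/

open Filter Topology Asymptotics Finset

theorem tendsto_sum_range_sub_mul_div_of_dominated {u v w D : ℕ → ℝ}
    (hlim : ∀ j, Tendsto (fun n => u (n - j) / u n) atTop (𝓝 (w j)))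
    (hbound : ∀ᶠ n in atTop, ∀ j ≤ n, |u (n - j) / u n| ≤ D j)
    (hD : Summable fun j => D j * v j) :
    Tendsto (fun n => (∑ j ∈ range (n + 1), u (n - j) * v j) / u n) atTop
      (𝓝 (∑' j, w j * v j)) := by
  set f : ℕ → ℕ → ℝ := fun n j => if j ≤ n then u (n - j) / u n * v j else 0
  have hf : ∀ n, ∑' j, f n j = (∑ j ∈ range (n + 1), u (n - j) * v j) / u n := by
    intro n
    rw [tsum_eq_sum (s := range (n + 1)) fun j hj => if_neg (by simpa [Nat.lt_succ_iff] using hj),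
      sum_div]
    refine sum_congr rfl fun j hj => ?_
    rw [if_pos (Nat.lt_succ_iff.mp (mem_range.mp hj)), div_mul_eq_mul_div]
  refine (tendsto_tsum_of_dominated_convergence hD.abs (fun j => ?_) ?_).congr hf
  · exact ((hlim j).mul_const (v j)).congr'
      ((eventually_ge_atTop j).mono fun n hn => (if_pos hn).symm)
  · filter_upwards [hbound] with n hn j
    by_cases hj : j ≤ n
    · simp only [f, if_pos hj, Real.norm_eq_abs, abs_mul]
      exact mul_le_mul_of_nonneg_right ((hn j hj).trans (le_abs_self _)) (abs_nonneg _)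
    · simp only [f, if_neg hj, norm_zero]
      exact abs_nonneg _

theorem tendsto_natCast_sub_div_natCast (m : ℕ) :
    Tendsto (fun n : ℕ => ((n - m : ℕ) : ℝ) / n) atTop (𝓝 1) := by
  refine ((tendsto_natCast_div_add_atTop (m : ℝ)).comp (tendsto_sub_atTop_nat m)).congr' ?_
  filter_upwards [eventually_ge_atTop m] with n hn
  simp [Nat.cast_sub hn]

section

variable {a : ℕ → ℝ} {ρ s c : ℝ}

theorem eventually_ne_zero_of_tendsto_mul_rpow_mul_pow (hc : c ≠ 0)
    (ha : Tendsto (fun n : ℕ => a n * (n : ℝ) ^ s * ρ ^ n) atTop (𝓝 c)) :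
    ∀ᶠ n in atTop, a n ≠ 0 :=
  (ha.eventually_ne hc).mono fun _ hn => left_ne_zero_of_mul (left_ne_zero_of_mul hn)

theorem tendsto_sub_div_of_tendsto_mul_rpow_mul_pow (hρ : ρ ≠ 0) (hc : c ≠ 0)
    (ha : Tendsto (fun n : ℕ => a n * (n : ℝ) ^ s * ρ ^ n) atTop (𝓝 c)) (m : ℕ) :
    Tendsto (fun n => a (n - m) / a n) atTop (𝓝 (ρ ^ m)) := by
  have hrpow : Tendsto (fun n : ℕ => (((n - m : ℕ) : ℝ) / n) ^ s) atTop (𝓝 1) := by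
    simpa using (tendsto_natCast_sub_div_natCast m).rpow_const (Or.inl one_ne_zero)
  have hshift : Tendsto (fun n : ℕ => a (n - m) * (n : ℝ) ^ s * ρ ^ n) atTop
      (𝓝 (c * ρ ^ m)) := by
    have h := ((ha.comp (tendsto_sub_atTop_nat m)).div hrpow one_ne_zero).mul_const (ρ ^ m)
    rw [div_one] at h
    refine h.congr' ?_
    filter_upwards [eventually_gt_atTop m] with n hn
    have hnm : (0 : ℝ) < ((n - m : ℕ) : ℝ) := by exact_mod_cast Nat.sub_pos_of_lt hn
    have hn0 : (0 : ℝ) < n := by exact_mod_cast (Nat.zero_le m).trans_lt hn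
    simp only [Pi.div_apply, Function.comp_apply, Real.div_rpow hnm.le hn0.le]
    rw [← pow_sub_mul_pow ρ hn.le]
    field_simp [(Real.rpow_pos_of_pos hnm s).ne']
  have h := hshift.div ha hc
  rw [mul_div_cancel_left₀ _ hc] at h
  refine h.congr' ?_
  filter_upwards [eventually_gt_atTop 0] with n hn
  have hn0 : (0 : ℝ) < n := by exact_mod_cast hn
  rw [Pi.div_apply, mul_assoc, mul_assoc,
    mul_div_mul_right _ _ (mul_ne_zero (Real.rpow_pos_of_pos hn0 s).ne' (pow_ne_zero n hρ))]

theorem exists_abs_mul_add_one_rpow_mul_pow_le (hρ : 0 ≤ ρ) (hs : 0 ≤ s)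
    (ha : Tendsto (fun n : ℕ => a n * (n : ℝ) ^ s * ρ ^ n) atTop (𝓝 c)) :
    ∃ K, ∀ m : ℕ, |a m| * (((m : ℝ) + 1) ^ s * ρ ^ m) ≤ K := by
  obtain ⟨M, hM⟩ := ha.abs.bddAbove_range
  -- `ha` says nothing about `a 0` when `0 < s`, hence the shift to `m + 1` and the `max`.
  refine ⟨max |a 0| (2 ^ s * M), fun m => ?_⟩
  rcases m with _ | m
  · simp
  have hdouble : ((m + 1 : ℕ) + 1 : ℝ) ^ s ≤ 2 ^ s * ((m + 1 : ℕ) : ℝ) ^ s := by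
    rw [← Real.mul_rpow zero_le_two (by positivity)]
    exact Real.rpow_le_rpow (by positivity) (by push_cast; linarith) hs
  have hφ : |a (m + 1)| * (((m + 1 : ℕ) : ℝ) ^ s * ρ ^ (m + 1)) ≤ M := by
    have : |a (m + 1) * ((m + 1 : ℕ) : ℝ) ^ s * ρ ^ (m + 1)| ≤ M := hM ⟨m + 1, rfl⟩
    rwa [abs_mul, abs_mul, abs_of_nonneg (by positivity : (0 : ℝ) ≤ ((m + 1 : ℕ) : ℝ) ^ s),
      abs_of_nonneg (pow_nonneg hρ _), mul_assoc] at this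
  calc |a (m + 1)| * ((((m + 1 : ℕ) : ℝ) + 1) ^ s * ρ ^ (m + 1))
      ≤ |a (m + 1)| * ((2 ^ s * ((m + 1 : ℕ) : ℝ) ^ s) * ρ ^ (m + 1)) := by gcongr
    _ = 2 ^ s * (|a (m + 1)| * (((m + 1 : ℕ) : ℝ) ^ s * ρ ^ (m + 1))) := by ring
    _ ≤ 2 ^ s * M := by gcongr
    _ ≤ _ := le_max_right _ _

theorem exists_abs_sub_div_le_mul_rpow_mul_pow (hρ : 0 < ρ) (hs : 0 ≤ s) (hc : c ≠ 0)
    (ha : Tendsto (fun n : ℕ => a n * (n : ℝ) ^ s * ρ ^ n) atTop (𝓝 c)) :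
    ∃ C, ∀ᶠ n in atTop, ∀ j ≤ n, |a (n - j) / a n| ≤ C * (((j : ℝ) + 1) ^ s * ρ ^ j) := by
  obtain ⟨K, hK⟩ := exists_abs_mul_add_one_rpow_mul_pow_le hρ.le hs ha
  have hK0 : 0 ≤ K := (abs_nonneg _).trans (by simpa using hK 0)
  have hc2 : 0 < |c| / 2 := half_pos (abs_pos.2 hc)
  refine ⟨2 * K / |c|, ?_⟩
  have hlow : ∀ᶠ n in atTop, |c| / 2 ≤ |a n| * ((n : ℝ) ^ s * ρ ^ n) := by
    filter_upwards [ha.abs.eventually (eventually_ge_nhds (half_lt_self (abs_pos.2 hc)))]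
      with n hn
    rwa [abs_mul, abs_mul, abs_of_nonneg (Real.rpow_nonneg n.cast_nonneg s),
      abs_of_nonneg (pow_nonneg hρ.le n), mul_assoc] at hn
  filter_upwards [hlow] with n hn j hj
  set P := (n : ℝ) ^ s * ρ ^ n
  set W := ((j : ℝ) + 1) ^ s * ρ ^ j
  have hP : 0 < P := pos_of_mul_pos_right (hc2.trans_le hn) (abs_nonneg _)
  have han : 0 < |a n| := pos_of_mul_pos_left (hc2.trans_le hn) hP.le
  have hsplit : P ≤ (((n - j : ℕ) : ℝ) + 1) ^ s * ρ ^ (n - j) * W := by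
    have hprod : (n : ℝ) ≤ (((n - j : ℕ) : ℝ) + 1) * ((j : ℝ) + 1) := by
      push_cast [Nat.cast_sub hj]
      nlinarith [(Nat.cast_le (α := ℝ)).2 hj]
    calc P = (n : ℝ) ^ s * (ρ ^ (n - j) * ρ ^ j) := by rw [pow_sub_mul_pow ρ hj]
      _ ≤ ((((n - j : ℕ) : ℝ) + 1) * ((j : ℝ) + 1)) ^ s * (ρ ^ (n - j) * ρ ^ j) := by
        gcongr
      _ = _ := by rw [Real.mul_rpow (by positivity) (by positivity)]; ring
  have key : |a (n - j)| * P ≤ 2 * K / |c| * W * |a n| * P :=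
    calc |a (n - j)| * P ≤ |a (n - j)| * ((((n - j : ℕ) : ℝ) + 1) ^ s * ρ ^ (n - j)) * W := by
          rw [mul_assoc]; gcongr
      _ ≤ K * W := by gcongr; exact hK (n - j)
      _ ≤ K * W * (|a n| * P / (|c| / 2)) := by
          refine le_mul_of_one_le_right (by positivity) ?_
          rwa [one_le_div hc2]
      _ = 2 * K / |c| * W * |a n| * P := by field_simp
  rw [abs_div, div_le_iff₀ han]
  exact le_of_mul_le_mul_right key hP

theorem isLittleO_add_one_rpow_mul_pow (s : ℝ) {ρ r : ℝ} (hρ : 0 < ρ) (hρr : ρ < r) :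
    (fun n : ℕ => ((n : ℝ) + 1) ^ s * ρ ^ n) =o[atTop] fun n => r ^ n := by
  have hq : 1 < r / ρ := (one_lt_div hρ).2 hρr
  have hq0 : 0 < r / ρ := zero_lt_one.trans hq
  have hexp := (isLittleO_rpow_exp_pos_mul_atTop s (Real.log_pos hq)).comp_tendsto
    (tendsto_atTop_add_const_right atTop 1 tendsto_natCast_atTop_atTop)
  have h := (hexp.mul_isBigO (isBigO_refl (fun n : ℕ => ρ ^ n) atTop)).const_mul_right
    (inv_ne_zero hq0.ne')
  refine h.congr_right fun n => ?_
  rw [Function.comp_apply, ← Real.rpow_def_of_pos hq0, ← Nat.cast_add_one, Real.rpow_natCast,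
    pow_succ, div_pow]
  field_simp [(hρ.trans hρr).ne']

theorem summable_add_one_rpow_mul_pow_mul (s : ℝ) {ρ r : ℝ} {b : ℕ → ℝ} (hρ : 0 < ρ)
    (hρr : ρ < r) (hb : Summable fun n => b n * r ^ n) :
    Summable fun n : ℕ => ((n : ℝ) + 1) ^ s * ρ ^ n * b n :=
  summable_of_isBigO_nat hb <|
    ((isLittleO_add_one_rpow_mul_pow s hρ hρr).isBigO.mul (isBigO_refl b atTop)).congr_right
      fun _ => mul_comm _ _

end

theorem component_size_boltzmann_limit_general (ρ c : ℝ) (hρ : 0 < ρ) (hc : 0 < c)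
    (a b : ℕ → ℝ)
    (ha : Tendsto (fun n : ℕ => a n * (n : ℝ) ^ ((3 : ℝ) / 2) * ρ ^ n)
      atTop (nhds c))
    (hb : ∃ r : ℝ, ρ < r ∧ Summable (fun n : ℕ => b n * r ^ n))
    (hpos : 0 < ∑' j : ℕ, ρ ^ j * b j) :
    (∀ k : ℕ, Tendsto (fun n : ℕ =>
        (a (n - k) * b k) / (∑ j ∈ Finset.range (n + 1), a (n - j) * b j))
      atTop (nhds ((ρ ^ k * b k) / (∑' j : ℕ, ρ ^ j * b j)))) ∧
    (∑' k : ℕ, (ρ ^ k * b k) / (∑' j : ℕ, ρ ^ j * b j)) = 1 := by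
  obtain ⟨r, hρr, hbr⟩ := hb
  have hratio := tendsto_sub_div_of_tendsto_mul_rpow_mul_pow hρ.ne' hc.ne' ha
  obtain ⟨C, hC⟩ := exists_abs_sub_div_le_mul_rpow_mul_pow hρ (by norm_num) hc.ne' ha
  have hconv := tendsto_sum_range_sub_mul_div_of_dominated (v := b) hratio hC <|
    ((summable_add_one_rpow_mul_pow_mul _ hρ hρr hbr).mul_left C).congr fun j => by ring
  refine ⟨fun k => ?_, by rw [tsum_div_const, div_self hpos.ne']⟩
  refine (((hratio k).mul_const (b k)).div hconv hpos.ne').congr' ?_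
  filter_upwards [eventually_ne_zero_of_tendsto_mul_rpow_mul_pow hc.ne' ha] with n hn
  rw [Pi.div_apply, div_mul_eq_mul_div, div_div_div_cancel_right₀ hn]

/-- If `a_n·n^{3/2}·ρ^n → c > 0` and `Σ b_n·r^n < ∞` for some `r > ρ`, with
`Σ b_k·ρ^k > 0`, then for every fixed `k` the ratio
`(a_{n−k}·b_k)/(Σ_{j=0}^{n} a_{n−j}·b_j)` converges to
`(ρ^k·b_k)/(Σ_{j≥0} ρ^j·b_j)`, and these limits sum to `1` over `k`. -/
theorem component_size_boltzmann_limit (ρ c : ℝ) (hρ : 0 < ρ) (hc : 0 < c)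
    (a b : ℕ → ℝ) (ha0 : ∀ n, 0 ≤ a n) (hb0 : ∀ n, 0 ≤ b n)
    (ha : Tendsto (fun n : ℕ => a n * (n : ℝ) ^ ((3 : ℝ) / 2) * ρ ^ n)
      atTop (nhds c))
    (hb : ∃ r : ℝ, ρ < r ∧ Summable (fun n : ℕ => b n * r ^ n))
    (hpos : 0 < ∑' j : ℕ, ρ ^ j * b j) :
    (∀ k : ℕ, Tendsto (fun n : ℕ =>
        (a (n - k) * b k) / (∑ j ∈ Finset.range (n + 1), a (n - j) * b j))
      atTop (nhds ((ρ ^ k * b k) / (∑' j : ℕ, ρ ^ j * b j)))) ∧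
    (∑' k : ℕ, (ρ ^ k * b k) / (∑' j : ℕ, ρ ^ j * b j)) = 1 :=
  component_size_boltzmann_limit_general ρ c hρ hc a b ha hb hpos
end

section
/- Let (X_i)_{i≥1} be an i.i.d. sequence of ℕ-valued random variables with n^{3/2}·P(X₁ = n) → c for some constant c > 0, and let (F, H) be an ℕ²-valued random vector, independent of the whole sequence (X_i), with E[exp(t·(F + H))] < ∞ for some t > 0. Then the random sum S := H + Σ_{i=1}^{F} X_i (empty sum = 0) satisfies P(S = n) / P(X₁ = n) → E[F] as n → ∞. -/
/-!
Conditioning on `(F, H)`, `P(S = n) = E[q_F(n - H)]`, where `q_f` is the `f`-fold convolution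
power of the law `p` of `X₁`. If `p(n) ~ c n^{-α}`, then `q_f(n - h) / p(n) → f` for fixed `f, h`:
by induction on `f`, splitting the convolution `q_{f+1} = q_f * p` at `n / 2`, each half is a
dominated sum in which only one summand is large. The one-big-jump bound
`q_f(m) ≤ C f^{α+1} m^{-α}` makes this uniform: `q_F(n - H) / p(n) ≤ K (F + H + 1)^{α+1}`,
which the exponential moment makes integrable, so dominated convergence gives `E[F]`.
-/

open MeasureTheory ProbabilityTheory Filter Finset Topology

lemma tendsto_sum_range_of_dominated {u : ℕ → ℕ → ℝ} {l bound : ℕ → ℝ} {N : ℕ → ℕ}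
    (hN : Tendsto N atTop atTop) (hbound : Summable bound)
    (hlim : ∀ k, Tendsto (u · k) atTop (𝓝 (l k)))
    (hdom : ∀ᶠ n in atTop, ∀ k < N n, ‖u n k‖ ≤ bound k) :
    Tendsto (fun n => ∑ k ∈ range (N n), u n k) atTop (𝓝 (∑' k, l k)) := by
  have hbound0 (k : ℕ) : 0 ≤ bound k := by
    obtain ⟨n, hn, hk⟩ := (hdom.and (hN.eventually_gt_atTop k)).exists
    exact (norm_nonneg _).trans (hn k hk)
  have hsum (n : ℕ) : ∑ k ∈ range (N n), u n k = ∑' k, if k < N n then u n k else 0 := by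
    rw [tsum_eq_sum (s := range (N n)) (by simp +contextual)]
    exact sum_congr rfl (by simp +contextual)
  simp_rw [hsum]
  refine tendsto_tsum_of_dominated_convergence hbound (fun k => (hlim k).congr' ?_) ?_
  · filter_upwards [hN.eventually_gt_atTop k] with n hn
    simp [hn]
  · filter_upwards [hdom] with n hn k
    split_ifs with hk
    exacts [hn k hk, by simpa using hbound0 k]

lemma sum_range_succ_sub_split_half {M : Type*} [AddCommMonoid M] (g : ℕ → ℕ → M) (n : ℕ) :
    ∑ k ∈ range (n + 1), g k (n - k) =
      ∑ k ∈ range (n + 1), (if 2 * k ≤ n then g k (n - k) else 0) +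
        ∑ j ∈ range (n + 1), (if 2 * j < n then g (n - j) j else 0) := by
  rw [← sum_range_reflect (fun j => if 2 * j < n then g (n - j) j else 0), ← sum_add_distrib]
  refine sum_congr rfl fun k hk => ?_
  have hk : k ≤ n := Nat.lt_succ_iff.1 (mem_range.1 hk)
  simp only [Nat.add_sub_cancel, Nat.sub_sub_self hk]
  split_ifs <;> first | omega | simp

def HasPowerTail (p : ℕ → ℝ) (α c : ℝ) : Prop :=
  Tendsto (fun n : ℕ => (n : ℝ) ^ α * p n) atTop (𝓝 c)

namespace HasPowerTail

variable {p : ℕ → ℝ} {α c : ℝ}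

lemma exists_le_mul_one_div_rpow (hpc : HasPowerTail p α c) :
    ∃ C, 0 ≤ C ∧ ∀ n, 0 < n → p n ≤ C * (1 / n) ^ α := by
  obtain ⟨M, hM⟩ := Tendsto.bddAbove_range hpc
  refine ⟨max M 0, le_max_right _ _, fun n hn => ?_⟩
  have hnα : (0 : ℝ) < (n : ℝ) ^ α := by positivity
  rw [Real.div_rpow zero_le_one (Nat.cast_nonneg n), Real.one_rpow, ← div_eq_mul_one_div,
    le_div_iff₀ hnα, mul_comm]
  exact (hM (Set.mem_range_self n)).trans (le_max_left _ _)

lemma eventually_pos (hpc : HasPowerTail p α c) (hc : 0 < c) : ∀ᶠ n in atTop, 0 < p n := by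
  filter_upwards [Tendsto.eventually hpc (eventually_gt_nhds hc)] with n hn
  exact pos_of_mul_pos_right hn (by positivity)

lemma exists_eventually_one_div_rpow_le (hpc : HasPowerTail p α c) (hα : 0 ≤ α)
    (hc : 0 < c) :
    ∃ K, 0 ≤ K ∧ ∀ᶠ n in atTop, ∀ m : ℕ, n ≤ 2 * m → (1 / m : ℝ) ^ α ≤ K * p n := by
  refine ⟨2 ^ α * (2 / c), by positivity, ?_⟩
  filter_upwards [Tendsto.eventually hpc (eventually_gt_nhds (half_lt_self hc)),
    eventually_gt_atTop 0] with n hn hn0 m hnm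
  have hn0' : (0 : ℝ) < n := by exact_mod_cast hn0
  have hm0 : (0 : ℝ) < m := by
    have : 0 < m := by omega
    exact_mod_cast this
  have hnm' : (n : ℝ) ≤ 2 * m := by exact_mod_cast hnm
  have hnα : (0 : ℝ) < (n : ℝ) ^ α := by positivity
  calc (1 / m : ℝ) ^ α ≤ (2 * (1 / n)) ^ α := by
        gcongr
        rw [div_le_iff₀ hm0]; field_simp; linarith
    _ = 2 ^ α * (1 / n ^ α) := by
        rw [Real.mul_rpow zero_le_two (by positivity), Real.div_rpow zero_le_one hn0'.le,
          Real.one_rpow]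
    _ ≤ 2 ^ α * (2 / c * p n) := by
        gcongr
        rw [div_le_iff₀ hnα, mul_assoc, mul_comm (p n), div_mul_eq_mul_div, le_div_iff₀ hc]
        linarith
    _ = 2 ^ α * (2 / c) * p n := by ring

lemma tendsto_sub_div (hpc : HasPowerTail p α c) (hc : c ≠ 0) (j : ℕ) :
    Tendsto (fun n => p (n - j) / p n) atTop (𝓝 1) := by
  have hsub : Tendsto (fun n : ℕ => ((n - j : ℕ) : ℝ) / n) atTop (𝓝 1) := by
    refine ((tendsto_natCast_div_add_atTop (j : ℝ)).comp (tendsto_sub_atTop_nat j)).congr' ?_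
    filter_upwards [eventually_ge_atTop j] with n hn
    simp [Nat.cast_sub hn]
  have hpow : Tendsto (fun n : ℕ => ((n : ℝ) / (n - j : ℕ)) ^ α) atTop (𝓝 1) := by
    have := (Real.continuousAt_rpow_const 1 α (Or.inl one_ne_zero)).tendsto.comp
      (by simpa using hsub.inv₀ one_ne_zero)
    simpa [Function.comp_def] using this
  have := ((Tendsto.comp hpc (tendsto_sub_atTop_nat j)).div hpc hc).mul hpow
  rw [div_self hc, one_mul] at this
  refine this.congr' ?_
  filter_upwards [eventually_gt_atTop j] with n hn
  have h1 : (0 : ℝ) < (n - j : ℕ) := by exact_mod_cast Nat.sub_pos_of_lt hn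
  have h2 : (0 : ℝ) < n := by exact_mod_cast (Nat.zero_le j).trans_lt hn
  rw [Pi.div_apply, Function.comp_apply, Real.div_rpow h2.le h1.le]
  have h1α : ((n - j : ℕ) : ℝ) ^ α ≠ 0 := by positivity
  have h2α : (n : ℝ) ^ α ≠ 0 := by positivity
  field_simp

lemma tendsto_sub_div_of_tendsto_div (hpc : HasPowerTail p α c) (hc : 0 < c) {u : ℕ → ℝ}
    {L : ℝ}
    (hu : Tendsto (fun n => u n / p n) atTop (𝓝 L)) (j : ℕ) :
    Tendsto (fun n => u (n - j) / p n) atTop (𝓝 L) := by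
  have := (hu.comp (tendsto_sub_atTop_nat j)).mul (hpc.tendsto_sub_div hc.ne' j)
  rw [mul_one] at this
  refine this.congr' ?_
  filter_upwards [tendsto_sub_atTop_nat j |>.eventually (hpc.eventually_pos hc)] with n hn
  simp [div_mul_div_cancel₀ hn.ne']

end HasPowerTail

noncomputable def convPow (p : ℕ → ℝ) : ℕ → ℕ → ℝ
  | 0 => fun m => if m = 0 then 1 else 0
  | f + 1 => fun m => ∑ k ∈ range (m + 1), convPow p f k * p (m - k)

namespace convPow

variable {p : ℕ → ℝ} {α c : ℝ}

@[simp] lemma zero_apply (m : ℕ) : convPow p 0 m = if m = 0 then 1 else 0 := rfl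

lemma succ_apply (f m : ℕ) :
    convPow p (f + 1) m = ∑ k ∈ range (m + 1), convPow p f k * p (m - k) := rfl

@[simp] lemma one : convPow p 1 = p := by
  ext m
  rw [succ_apply, sum_eq_single 0 (fun k _ hk => by simp [hk]) (by simp)]
  simp

lemma nonneg (hp0 : ∀ n, 0 ≤ p n) (f m : ℕ) : 0 ≤ convPow p f m := by
  induction f generalizing m with
  | zero => simp only [zero_apply]; split_ifs <;> norm_num
  | succ f ih => exact sum_nonneg fun k _ => mul_nonneg (ih k) (hp0 _)

lemma hasSum (hp0 : ∀ n, 0 ≤ p n) (hp1 : HasSum p 1) (f : ℕ) : HasSum (convPow p f) 1 := by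
  induction f with
  | zero => exact hasSum_ite_eq 0 1
  | succ f ih =>
    have hprod : Summable fun x : ℕ × ℕ => convPow p f x.1 * p x.2 :=
      ih.summable.mul_of_nonneg hp1.summable (nonneg hp0 f) hp0
    have hsum := (summable_sum_mul_range_of_summable_mul hprod).hasSum
    rwa [← ih.summable.tsum_mul_tsum_eq_tsum_sum_range hp1.summable hprod, ih.tsum_eq,
      hp1.tsum_eq, one_mul] at hsum

lemma le_one (hp0 : ∀ n, 0 ≤ p n) (hp1 : HasSum p 1) (f m : ℕ) : convPow p f m ≤ 1 :=
  le_hasSum (hasSum hp0 hp1 f) m fun k _ => nonneg hp0 f k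

/-- One-big-jump step: either `m - k ≥ m / (f + 1)` and the tail bound on `p` applies, or
`k > f m / (f + 1)` and the inductive bound on `convPow p f` applies. -/
lemma mul_le_of_le_mul_div_rpow (hp0 : ∀ n, 0 ≤ p n) (hα : 0 ≤ α) {C : ℝ} (hC0 : 0 ≤ C)
    (hC : ∀ n, 0 < n → p n ≤ C * (1 / n) ^ α) {f m k : ℕ} (hkm : k ≤ m) (hm : 0 < m)
    (ih : ∀ k, 0 < k → convPow p f k ≤ C * f * (f / k) ^ α) :
    convPow p f k * p (m - k) ≤
      C * ((f + 1) / m) ^ α * (convPow p f k + f * p (m - k)) := by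
  set B := C * (((f : ℝ) + 1) / m) ^ α
  have hB0 : 0 ≤ B := by positivity
  have hm' : (0 : ℝ) < m := by exact_mod_cast hm
  have hf := Nat.cast_nonneg (α := ℝ) f
  have hq0 := nonneg hp0 f k
  have hpk := hp0 (m - k)
  have hfp : 0 ≤ B * (f * p (m - k)) := by positivity
  by_cases hsmall : (m : ℝ) ≤ (f + 1) * (m - k : ℕ)
  · have hd0 : (0 : ℝ) < (m - k : ℕ) := by
      by_contra! h; nlinarith
    have hle : p (m - k) ≤ B := by
      have hfrac : 1 / ((m - k : ℕ) : ℝ) ≤ (f + 1) / m := by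
        rw [div_le_div_iff₀ hd0 hm']; linarith
      calc p (m - k) ≤ C * (1 / (m - k : ℕ)) ^ α := hC _ (by exact_mod_cast hd0)
        _ ≤ C * ((f + 1) / m) ^ α := by gcongr
    nlinarith [mul_le_mul_of_nonneg_left hle hq0]
  · have hd : ((m - k : ℕ) : ℝ) = m - k := by push_cast [hkm]; ring
    rw [hd] at hsmall
    have hk0 : (0 : ℝ) < k := by
      by_contra! h; nlinarith [Nat.cast_nonneg (α := ℝ) k]
    have hle : convPow p f k ≤ f * B := by
      have hfrac : (f : ℝ) / k ≤ (f + 1) / m := by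
        rw [div_le_div_iff₀ hk0 hm']; linarith
      calc convPow p f k ≤ C * f * (f / k) ^ α := ih k (by exact_mod_cast hk0)
        _ = f * (C * (f / k) ^ α) := by ring
        _ ≤ f * (C * ((f + 1) / m) ^ α) := by gcongr
    nlinarith [mul_le_mul_of_nonneg_right hle hpk, mul_nonneg hB0 hq0]

lemma le_mul_div_rpow (hp0 : ∀ n, 0 ≤ p n) (hp1 : HasSum p 1) (hα : 0 ≤ α) {C : ℝ}
    (hC0 : 0 ≤ C) (hC : ∀ n, 0 < n → p n ≤ C * (1 / n) ^ α) (f : ℕ) {m : ℕ} (hm : 0 < m) :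
    convPow p f m ≤ C * f * (f / m) ^ α := by
  induction f generalizing m with
  | zero => simp [hm.ne']
  | succ f ih =>
    have hq : ∑ k ∈ range (m + 1), convPow p f k ≤ 1 :=
      sum_le_hasSum _ (fun k _ => nonneg hp0 f k) (hasSum hp0 hp1 f)
    have hp : ∑ k ∈ range (m + 1), p (m - k) ≤ 1 := by
      rw [show ∑ k ∈ range (m + 1), p (m - k) = ∑ k ∈ range (m + 1), p k by
        simpa using sum_range_reflect p (m + 1)]
      exact sum_le_hasSum _ (fun k _ => hp0 k) hp1
    calc convPow p (f + 1) m = ∑ k ∈ range (m + 1), convPow p f k * p (m - k) := rfl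
      _ ≤ ∑ k ∈ range (m + 1), C * ((f + 1) / m) ^ α * (convPow p f k + f * p (m - k)) :=
          sum_le_sum fun k hk => mul_le_of_le_mul_div_rpow hp0 hα hC0 hC
            (Nat.lt_succ_iff.1 (mem_range.1 hk)) hm fun k hk => ih hk
      _ = C * ((f + 1) / m) ^ α *
            (∑ k ∈ range (m + 1), convPow p f k + f * ∑ k ∈ range (m + 1), p (m - k)) := by
          rw [← mul_sum, sum_add_distrib, mul_sum]
      _ ≤ C * ((f + 1) / m) ^ α * (1 + f * 1) := by gcongr
      _ = C * ↑(f + 1) * (↑(f + 1) / m) ^ α := by push_cast; ring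

section PowerTail

variable (hp0 : ∀ n, 0 ≤ p n) (hp1 : HasSum p 1) (hα : 0 ≤ α) (hc : 0 < c)
  (hpc : HasPowerTail p α c)
include hp0 hp1 hα hc hpc

lemma exists_eventually_le_mul :
    ∃ K, 0 ≤ K ∧ ∀ᶠ n in atTop, ∀ f m : ℕ, n ≤ 2 * m → convPow p f m ≤ K * f ^ (α + 1) * p n := by
  obtain ⟨C, hC0, hC⟩ := hpc.exists_le_mul_one_div_rpow
  obtain ⟨K, hK0, hK⟩ := hpc.exists_eventually_one_div_rpow_le hα hc
  refine ⟨C * K, by positivity, ?_⟩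
  filter_upwards [hK, eventually_gt_atTop 0] with n hn hn0 f m hnm
  calc convPow p f m ≤ C * f * (f / m) ^ α := le_mul_div_rpow hp0 hp1 hα hC0 hC f (by omega)
    _ = C * (f * f ^ α) * (1 / m) ^ α := by
        rw [div_eq_mul_one_div (f : ℝ), Real.mul_rpow (by positivity) (by positivity)]; ring
    _ ≤ C * (f * f ^ α) * (K * p n) := by gcongr; exact hn m hnm
    _ = C * K * f ^ (α + 1) * p n := by
        rw [Real.rpow_add_one' (Nat.cast_nonneg f) (by linarith)]; ring

lemma tendsto_sum_lower_half_div (f : ℕ) :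
    Tendsto (fun n => ∑ k ∈ range (n + 1),
      (if 2 * k ≤ n then convPow p f k * p (n - k) else 0) / p n) atTop (𝓝 1) := by
  obtain ⟨K, hK0, hK⟩ := exists_eventually_le_mul hp0 hp1 hα hc hpc
  have hq := hasSum hp0 hp1 f
  rw [← hq.tsum_eq]
  refine tendsto_sum_range_of_dominated (tendsto_add_atTop_nat 1) (hq.summable.mul_left K)
    (fun k => ?_) ?_
  · have := (hpc.tendsto_sub_div hc.ne' k).const_mul (convPow p f k)
    rw [mul_one] at this
    refine this.congr' ?_
    filter_upwards [eventually_ge_atTop (2 * k)] with n hn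
    rw [if_pos hn, mul_div_assoc]
  · filter_upwards [hK, hpc.eventually_pos hc] with n hn hpn k hk
    have hq0 := nonneg hp0 f k
    split_ifs with hkn
    · have hp := hn 1 (n - k) (by omega)
      simp only [one, Nat.cast_one, Real.one_rpow, mul_one] at hp
      rw [Real.norm_of_nonneg (by have := hp0 (n - k); positivity), div_le_iff₀ hpn,
        mul_comm K, mul_assoc]
      exact mul_le_mul_of_nonneg_left hp hq0
    · simpa using mul_nonneg hK0 hq0

lemma tendsto_sum_upper_half_div {f : ℕ}
    (hf : Tendsto (fun n => convPow p f n / p n) atTop (𝓝 f)) :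
    Tendsto (fun n => ∑ j ∈ range (n + 1),
      (if 2 * j < n then convPow p f (n - j) * p j else 0) / p n) atTop (𝓝 f) := by
  obtain ⟨K, hK0, hK⟩ := exists_eventually_le_mul hp0 hp1 hα hc hpc
  rw [← mul_one (f : ℝ), ← hp1.tsum_eq, ← tsum_mul_left]
  refine tendsto_sum_range_of_dominated (tendsto_add_atTop_nat 1)
    (hp1.summable.mul_left (K * f ^ (α + 1))) (fun j => ?_) ?_
  · refine ((hpc.tendsto_sub_div_of_tendsto_div hc hf j).mul_const (p j)).congr' ?_
    filter_upwards [eventually_gt_atTop (2 * j)] with n hn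
    rw [if_pos hn, div_mul_eq_mul_div]
  · filter_upwards [hK, hpc.eventually_pos hc] with n hn hpn j hj
    split_ifs with hjn
    · rw [Real.norm_of_nonneg (by have := nonneg hp0 f (n - j); have := hp0 j; positivity),
        div_le_iff₀ hpn]
      calc convPow p f (n - j) * p j ≤ K * f ^ (α + 1) * p n * p j :=
            mul_le_mul_of_nonneg_right (hn f (n - j) (by omega)) (hp0 j)
        _ = K * f ^ (α + 1) * p j * p n := by ring
    · simpa using mul_nonneg (by positivity) (hp0 j)

lemma tendsto_div (f : ℕ) : Tendsto (fun n => convPow p f n / p n) atTop (𝓝 f) := by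
  induction f with
  | zero =>
    refine tendsto_const_nhds.congr' ?_
    filter_upwards [eventually_gt_atTop 0] with n hn
    simp [hn.ne']
  | succ f ih =>
    refine (((tendsto_sum_lower_half_div hp0 hp1 hα hc hpc f).add
      (tendsto_sum_upper_half_div hp0 hp1 hα hc hpc ih)).congr fun n => ?_).trans
      (by push_cast; rw [add_comm])
    rw [succ_apply, sum_range_succ_sub_split_half (fun k j => convPow p f k * p j), add_div,
      sum_div, sum_div]

lemma tendsto_ite_sub_div (f h : ℕ) :
    Tendsto (fun n => (if h ≤ n then convPow p f (n - h) else 0) / p n) atTop (𝓝 f) := by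
  refine (hpc.tendsto_sub_div_of_tendsto_div hc (tendsto_div hp0 hp1 hα hc hpc f) h).congr' ?_
  filter_upwards [eventually_ge_atTop h] with n hn
  rw [if_pos hn]

lemma exists_eventually_norm_ite_sub_div_le :
    ∃ K, ∀ᶠ n in atTop, ∀ f h : ℕ,
      ‖(if h ≤ n then convPow p f (n - h) else 0) / p n‖ ≤ K * ((f : ℝ) + h + 1) ^ (α + 1) := by
  obtain ⟨K₁, hK₁0, hK₁⟩ := exists_eventually_le_mul hp0 hp1 hα hc hpc
  obtain ⟨K₂, hK₂0, hK₂⟩ := hpc.exists_eventually_one_div_rpow_le hα hc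
  refine ⟨K₁ + K₂, ?_⟩
  filter_upwards [hK₁, hK₂, hpc.eventually_pos hc] with n h₁ h₂ hpn f h
  have hf : (0 : ℝ) ≤ f := Nat.cast_nonneg f
  have hh : (0 : ℝ) ≤ h := Nat.cast_nonneg h
  have hq0 : 0 ≤ if h ≤ n then convPow p f (n - h) else 0 := by
    split_ifs <;> simp [nonneg hp0]
  rw [Real.norm_of_nonneg (div_nonneg hq0 hpn.le), div_le_iff₀ hpn]
  -- Either `n - h ≥ n / 2` and the uniform bound applies, or `n ≤ 2 (h + 1)`, where the
  -- probability is at most `1` and `1 / p n = O((h + 1) ^ α)`.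
  by_cases hnh : h ≤ n ∧ n ≤ 2 * (n - h)
  · rw [if_pos hnh.1]
    calc convPow p f (n - h) ≤ K₁ * f ^ (α + 1) * p n := h₁ f (n - h) hnh.2
      _ ≤ (K₁ + K₂) * ((f : ℝ) + h + 1) ^ (α + 1) * p n := by
          gcongr
          · linarith
          · linarith
  · have hn : n ≤ 2 * (h + 1) := by omega
    have hpow : (1 / (h + 1 : ℝ)) ^ α * (h + 1 : ℝ) ^ α = 1 := by
      rw [← Real.mul_rpow (by positivity) (by positivity), one_div_mul_cancel (by positivity),
        Real.one_rpow]
    calc (if h ≤ n then convPow p f (n - h) else 0) ≤ (1 / (h + 1 : ℝ)) ^ α * (h + 1 : ℝ) ^ α := by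
          rw [hpow]; split_ifs <;> simp [le_one hp0 hp1]
      _ ≤ K₂ * p n * ((f : ℝ) + h + 1) ^ (α + 1) := by
          gcongr
          · exact_mod_cast h₂ (h + 1) hn
          · calc (h + 1 : ℝ) ^ α ≤ ((f : ℝ) + h + 1) ^ α := by gcongr; linarith
              _ ≤ ((f : ℝ) + h + 1) ^ (α + 1) :=
                Real.rpow_le_rpow_of_exponent_le (by linarith) (by linarith)
      _ ≤ (K₁ + K₂) * ((f : ℝ) + h + 1) ^ (α + 1) * p n := by
          rw [mul_right_comm]; gcongr; linarith

end PowerTail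

end convPow

section Probability

variable {Ω : Type*} [MeasurableSpace Ω] {P : Measure Ω}

lemma hasSum_measureReal_preimage_singleton [IsProbabilityMeasure P] {β : Type*}
    [MeasurableSpace β] [MeasurableSingletonClass β] [Countable β] {Y : Ω → β}
    (hY : Measurable Y) : HasSum (fun b => P.real (Y ⁻¹' {b})) 1 := by
  have h : ∑' b, P (Y ⁻¹' {b}) = 1 := by
    rw [← measure_iUnion (pairwise_disjoint_fiber Y) fun b => hY (measurableSet_singleton b),
      ← Set.preimage_iUnion, Set.iUnion_of_singleton, Set.preimage_univ, measure_univ]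
  have hs : Summable fun b => P.real (Y ⁻¹' {b}) :=
    ENNReal.summable_toReal (by rw [h]; exact ENNReal.one_ne_top)
  rw [hs.hasSum_iff, ← ENNReal.toReal_one, ← h, ENNReal.tsum_toReal_eq fun b => measure_ne_top P _]
  rfl

lemma ProbabilityTheory.IndepFun.measureReal_add_eq_sum [IsFiniteMeasure P] {U V : Ω → ℕ}
    (hUV : IndepFun U V P) (hU : Measurable U) (hV : Measurable V) (m : ℕ) :
    P.real {ω | U ω + V ω = m} =
      ∑ k ∈ range (m + 1), P.real {ω | U ω = k} * P.real {ω | V ω = m - k} := by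
  have hset : {ω | U ω + V ω = m} = ⋃ k ∈ range (m + 1), U ⁻¹' {k} ∩ V ⁻¹' {m - k} := by
    ext ω
    simp only [Set.mem_ofPred_eq, Set.mem_iUnion, Set.mem_inter_iff, Set.mem_preimage,
      Set.mem_singleton_iff, mem_range, exists_prop]
    constructor
    · intro h; exact ⟨U ω, by omega, rfl, by omega⟩
    · rintro ⟨k, hk, rfl, h⟩; omega
  rw [hset, measureReal_biUnion_finset]
  · refine sum_congr rfl fun k _ => ?_
    simp only [Measure.real, hUV.measure_inter_preimage_eq_mul _ _ (measurableSet_singleton _)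
      (measurableSet_singleton _), ENNReal.toReal_mul]
    rfl
  · intro a _ b _ hab
    exact Set.disjoint_left.2 fun ω ha hb => hab (ha.1.symm.trans hb.1)
  · exact fun k _ => (hU (measurableSet_singleton _)).inter (hV (measurableSet_singleton _))

lemma ProbabilityTheory.IndepFun.measureReal_preimage_eq_integral [IsFiniteMeasure P]
    {β γ : Type*} [MeasurableSpace β] [MeasurableSpace γ] {G : Ω → β} {Y : Ω → γ}
    (hGY : IndepFun G Y P) (hG : Measurable G) (hY : Measurable Y) {s : Set (β × γ)}
    (hs : MeasurableSet s) :
    P.real ((fun ω => (G ω, Y ω)) ⁻¹' s) =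
      ∫ ω, P.real ((fun ω' => (G ω, Y ω')) ⁻¹' s) ∂P := by
  have hslice := measurable_measure_prodMk_left (ν := P.map Y) hs
  calc P.real ((fun ω => (G ω, Y ω)) ⁻¹' s) = ((P.map G).prod (P.map Y) s).toReal := by
        rw [← (indepFun_iff_map_prod_eq_prod_map_map hG.aemeasurable hY.aemeasurable).1 hGY,
          Measure.map_apply (hG.prodMk hY) hs]; rfl
    _ = ∫ b, (P.map Y (Prod.mk b ⁻¹' s)).toReal ∂(P.map G) := by
        rw [Measure.prod_apply hs, integral_toReal hslice.aemeasurable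
          (ae_of_all _ fun b => measure_lt_top _ _)]
    _ = ∫ ω, (P.map Y (Prod.mk (G ω) ⁻¹' s)).toReal ∂P :=
        integral_map hG.aemeasurable hslice.ennreal_toReal.aestronglyMeasurable
    _ = ∫ ω, P.real ((fun ω' => (G ω, Y ω')) ⁻¹' s) ∂P := by
        refine integral_congr_ae (ae_of_all _ fun ω => ?_)
        dsimp only
        rw [Measure.map_apply hY (measurable_prodMk_left hs)]; rfl

lemma integrable_rpow_of_integrable_exp [IsFiniteMeasure P] {Y : Ω → ℝ} (hY : Measurable Y)
    (hY0 : ∀ ω, 0 ≤ Y ω) {t : ℝ} (ht : 0 < t)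
    (hexp : Integrable (fun ω => Real.exp (t * Y ω)) P) {r : ℝ} (hr : 0 ≤ r) :
    Integrable (fun ω => Y ω ^ r) P := by
  refine integrable_rpow_of_integrable_exp_mul ht.ne' hexp ?_ hr
  refine Integrable.of_bound (by fun_prop) 1 (ae_of_all _ fun ω => ?_)
  rw [Real.norm_of_nonneg (Real.exp_nonneg _), Real.exp_le_one_iff]
  nlinarith [hY0 ω]

section IID

variable [IsProbabilityMeasure P] {X : ℕ → Ω → ℕ} (hXm : ∀ i, Measurable (X i))
  (hXindep : iIndepFun X P) (hXid : ∀ i, IdentDistrib (X i) (X 0) P P)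
include hXm hXindep hXid

lemma measureReal_sum_range_eq_convPow (f m : ℕ) :
    P.real {ω | ∑ i ∈ range f, X i ω = m} = convPow (fun n => P.real {ω | X 0 ω = n}) f m := by
  induction f generalizing m with
  | zero => rcases eq_or_ne m 0 with rfl | hm <;> simp [*, eq_comm]
  | succ f ih =>
    have hind : IndepFun (fun ω => ∑ i ∈ range f, X i ω) (X f) P := by
      simpa only [Finset.sum_fn] using hXindep.indepFun_finsetSum_of_notMem hXm notMem_range_self
    simp_rw [sum_range_succ]
    rw [hind.measureReal_add_eq_sum (by fun_prop) (hXm f), convPow.succ_apply]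
    refine sum_congr rfl fun k _ => ?_
    rw [ih]
    exact congrArg (_ * ENNReal.toReal ·) ((hXid f).measure_mem_eq (measurableSet_singleton _))

lemma measureReal_add_sum_range_eq (h f n : ℕ) :
    P.real {ω | h + ∑ i ∈ range f, X i ω = n} =
      if h ≤ n then convPow (fun n => P.real {ω | X 0 ω = n}) f (n - h) else 0 := by
  split_ifs with hh
  · rw [← measureReal_sum_range_eq_convPow hXm hXindep hXid]
    congr 1; ext ω; simp only [Set.mem_ofPred_eq]; omega
  · convert measureReal_empty (μ := P)
    ext ω
    simp only [Set.mem_ofPred_eq, Set.mem_empty_iff_false, iff_false]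
    omega

lemma measureReal_randomSum_eq_integral {F H : Ω → ℕ} (hFm : Measurable F) (hHm : Measurable H)
    (hFH : IndepFun (fun ω => (F ω, H ω)) (fun ω i => X i ω) P) (n : ℕ) :
    P.real {ω | H ω + ∑ i ∈ range (F ω), X i ω = n} =
      ∫ ω, (if H ω ≤ n then convPow (fun n => P.real {ω | X 0 ω = n}) (F ω) (n - H ω) else 0)
        ∂P := by
  have hφ : Measurable fun x : (ℕ × ℕ) × (ℕ → ℕ) => x.1.2 + ∑ i ∈ range x.1.1, x.2 i :=
    measurable_from_prod_countable_right fun fh => (measurable_const (a := fh.2)).add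
      (Finset.measurable_sum (range fh.1) fun i _ => measurable_pi_apply i)
  refine (hFH.measureReal_preimage_eq_integral (hFm.prodMk hHm) (measurable_pi_lambda _ hXm)
    (hφ (measurableSet_singleton n))).trans (integral_congr_ae (ae_of_all _ fun ω => ?_))
  exact measureReal_add_sum_range_eq hXm hXindep hXid (H ω) (F ω) n

end IID

end Probability

/-- Let `(X_i)` be iid `ℕ`-valued with `n^{3/2}·P(X₁ = n) → c > 0`, and let
`(F, H)` be an `ℕ²`-valued vector independent of the sequence, with finite
exponential moments. Then `S := H + Σ_{i=1}^{F} X_i` satisfies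
`P(S = n)/P(X₁ = n) → E[F]`. -/
theorem random_sum_local_limit
    {Ω : Type*} [MeasurableSpace Ω] (P : Measure Ω) [IsProbabilityMeasure P]
    (X : ℕ → Ω → ℕ) (hXm : ∀ i, Measurable (X i))
    (hXindep : iIndepFun X P)
    (hXid : ∀ i, IdentDistrib (X i) (X 0) P P)
    (c : ℝ) (hc : 0 < c)
    (hXtail : Tendsto
      (fun n : ℕ => (n : ℝ) ^ ((3 : ℝ) / 2) * (P {ω | X 0 ω = n}).toReal)
      atTop (nhds c))
    (F H : Ω → ℕ) (hFm : Measurable F) (hHm : Measurable H)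
    (hFH : IndepFun (fun ω => (F ω, H ω)) (fun ω i => X i ω) P)
    (hexp : ∃ t : ℝ, 0 < t ∧
      Integrable (fun ω => Real.exp (t * ((F ω : ℝ) + (H ω : ℝ)))) P) :
    Tendsto (fun n : ℕ =>
        (P {ω | H ω + ∑ i ∈ Finset.range (F ω), X i ω = n}).toReal
          / (P {ω | X 0 ω = n}).toReal)
      atTop (nhds (∫ ω, (F ω : ℝ) ∂P)) := by
  obtain ⟨t, ht, hint⟩ := hexp
  set p : ℕ → ℝ := fun n => P.real {ω | X 0 ω = n}
  have hp0 (n : ℕ) : 0 ≤ p n := measureReal_nonneg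
  have hp1 : HasSum p 1 := hasSum_measureReal_preimage_singleton (hXm 0)
  have hα : (0 : ℝ) ≤ 3 / 2 := by norm_num
  obtain ⟨K, hK⟩ := convPow.exists_eventually_norm_ite_sub_div_le hp0 hp1 hα hc hXtail
  have hmoment : Integrable (fun ω => K * ((F ω : ℝ) + H ω + 1) ^ ((3 : ℝ) / 2 + 1)) P := by
    refine (integrable_rpow_of_integrable_exp (by fun_prop) (fun ω => by positivity) ht ?_
      (by norm_num)).const_mul K
    simpa only [mul_add, mul_one, Real.exp_add] using hint.mul_const (Real.exp t)
  have hlim := tendsto_integral_filter_of_dominated_convergence (l := atTop)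
    (F := fun n ω => (if H ω ≤ n then convPow p (F ω) (n - H ω) else 0) / p n) _
    (Eventually.of_forall fun n =>
      ((measurable_of_countable fun fh : ℕ × ℕ =>
        (if fh.2 ≤ n then convPow p fh.1 (n - fh.2) else 0) / p n).comp
          (hFm.prodMk hHm)).aestronglyMeasurable)
    (by filter_upwards [hK] with n hn using ae_of_all _ fun ω => hn (F ω) (H ω)) hmoment
    (ae_of_all _ fun ω => convPow.tendsto_ite_sub_div hp0 hp1 hα hc hXtail (F ω) (H ω))
  refine hlim.congr fun n => ?_
  rw [integral_div, ← measureReal_randomSum_eq_integral hXm hXindep hXid hFm hHm hFH]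
  rfl
end

section
/- Let (X_i)_{i≥1} be an i.i.d. sequence of ℕ-valued random variables with n^{3/2}·P(X₁ = n) → c for some constant c > 0, and let (F, H) be an ℕ²-valued random vector, independent of the whole sequence (X_i), with E[exp(t·(F + H))] < ∞ for some t > 0 and P(F ≥ 1) > 0. Set S := H + Σ_{i=1}^{F} X_i. Then the conditional expectation E[F | S = n] remains bounded as n → ∞; that is, there exist a constant B and N such that for all n ≥ N one has P(S = n) > 0 and E[F | S = n] ≤ B. -/
/-!
The key input is the "one big jump" estimate for the random walk: if `∑ i < k, X i = m` then
some summand is at least `m / k`, so `P(X₁ + ⋯ + X_k = m) ≤ C k³ / m^{3/2}`. Conditioning on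
`(F, H) = (k, h)`, which is independent of the walk, a value with `2h < n` contributes
`k · P(S_k = n - h) ≲ k⁴ / n^{3/2}`, while one with `2h ≥ n` is paid for by the exponential
moment; hence `n^{3/2} E[F; S = n]` is bounded by a multiple of `E[exp (t (F + H))]`.
Conversely, fixing a value `(f, h)` of `(F, H)` with `f ≥ 1` and letting all jumps but one take
a fixed value `N₀` from the range of the tail asymptotics gives `P(S = n) ≳ n^{-3/2}`.
-/

open MeasureTheory ProbabilityTheory Filter Finset
open scoped ENNReal Nat

namespace ProbabilityTheory

variable {Ω α β : Type*} [MeasurableSpace Ω] [MeasurableSpace α] [MeasurableSpace β]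
  {μ : Measure Ω} [IsFiniteMeasure μ] {Y : Ω → α} {Z : Ω → β}

theorem IndepFun.lintegral_comp_eq_lintegral_lintegral (hY : Measurable Y) (hZ : Measurable Z)
    (hYZ : IndepFun Y Z μ) {G : α → β → ℝ≥0∞} (hG : Measurable (Function.uncurry G)) :
    ∫⁻ ω, G (Y ω) (Z ω) ∂μ = ∫⁻ ω, ∫⁻ ω', G (Y ω) (Z ω') ∂μ ∂μ := by
  calc ∫⁻ ω, G (Y ω) (Z ω) ∂μ = ∫⁻ p, Function.uncurry G p ∂(μ.map fun ω ↦ (Y ω, Z ω)) :=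
        (lintegral_map hG (hY.prodMk hZ)).symm
    _ = ∫⁻ a, ∫⁻ b, Function.uncurry G (a, b) ∂(μ.map Z) ∂(μ.map Y) := by
        rw [(indepFun_iff_map_prod_eq_prod_map_map hY.aemeasurable hZ.aemeasurable).1 hYZ,
          lintegral_prod _ hG.aemeasurable]
    _ = ∫⁻ ω, ∫⁻ ω', G (Y ω) (Z ω') ∂μ ∂μ := by
        rw [lintegral_map hG.lintegral_prod_right' hY]
        exact lintegral_congr fun ω ↦ lintegral_map (hG.comp measurable_prodMk_left) hZ

theorem IndepFun.measure_eq_lintegral_measure (hY : Measurable Y) (hZ : Measurable Z)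
    (hYZ : IndepFun Y Z μ) {s : Set (α × β)} (hs : MeasurableSet s) :
    μ {ω | (Y ω, Z ω) ∈ s} = ∫⁻ ω, μ {ω' | (Y ω, Z ω') ∈ s} ∂μ := by
  calc μ {ω | (Y ω, Z ω) ∈ s} = μ.map (fun ω ↦ (Y ω, Z ω)) s :=
        (Measure.map_apply (hY.prodMk hZ) hs).symm
    _ = ∫⁻ a, μ.map Z (Prod.mk a ⁻¹' s) ∂μ.map Y := by
        rw [(indepFun_iff_map_prod_eq_prod_map_map hY.aemeasurable hZ.aemeasurable).1 hYZ,
          Measure.prod_apply hs]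
    _ = ∫⁻ ω, μ {ω' | (Y ω, Z ω') ∈ s} ∂μ := by
        rw [lintegral_map (measurable_measure_prodMk_left hs) hY]
        exact lintegral_congr fun ω ↦ Measure.map_apply hZ (measurable_prodMk_left hs)

end ProbabilityTheory

lemma natCast_rpow_three_halves_le_sq (n : ℕ) : (n : ℝ) ^ (3 / 2 : ℝ) ≤ (n : ℝ) ^ 2 := by
  rcases n.eq_zero_or_pos with rfl | hn
  · simp [Real.zero_rpow]
  · simpa using Real.rpow_le_rpow_of_exponent_le (Nat.one_le_cast.2 hn)
      (show (3 / 2 : ℝ) ≤ 2 by norm_num)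

lemma pow_le_factorial_div_pow_mul_exp {x t : ℝ} (hx : 0 ≤ x) (ht : 0 < t) (j : ℕ) :
    x ^ j ≤ j ! / t ^ j * Real.exp (t * x) := by
  have h := Real.pow_div_factorial_le_exp _ (mul_nonneg ht.le hx) j
  rw [div_le_iff₀ (by positivity), mul_pow] at h
  rw [div_mul_eq_mul_div, le_div_iff₀ (by positivity)]
  linarith

lemma natCast_rpow_mul_le_exp_of_le_two_mul {n k h : ℕ} (hnh : n ≤ 2 * h) {t : ℝ} (ht : 0 < t) :
    (n : ℝ) ^ (3 / 2 : ℝ) * k ≤ 4 * 3 ! / t ^ 3 * Real.exp (t * (k + h)) := by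
  have hk : (0 : ℝ) ≤ k := k.cast_nonneg
  have hh : (0 : ℝ) ≤ h := h.cast_nonneg
  calc (n : ℝ) ^ (3 / 2 : ℝ) * k ≤ (2 * h) ^ 2 * k := by
        gcongr
        exact (natCast_rpow_three_halves_le_sq n).trans (by gcongr; exact_mod_cast hnh)
    _ ≤ 4 * ((k : ℝ) + h) ^ 3 := by
        nlinarith [mul_nonneg (mul_nonneg hh hh) hk, pow_nonneg hk 3, pow_nonneg hh 3,
          mul_nonneg (mul_nonneg hk hk) hh]
    _ ≤ 4 * (3 ! / t ^ 3 * Real.exp (t * (k + h))) := by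
        gcongr; exact pow_le_factorial_div_pow_mul_exp (by positivity) ht 3
    _ = 4 * 3 ! / t ^ 3 * Real.exp (t * (k + h)) := by ring

lemma natCast_rpow_le_four_mul_of_le_two_mul {n m : ℕ} (hnm : n ≤ 2 * m) :
    (n : ℝ) ^ (3 / 2 : ℝ) ≤ 4 * (m : ℝ) ^ (3 / 2 : ℝ) :=
  calc (n : ℝ) ^ (3 / 2 : ℝ) ≤ ((2 : ℕ) * (m : ℝ)) ^ (3 / 2 : ℝ) := by
        gcongr; exact_mod_cast hnm
    _ = ((2 : ℕ) : ℝ) ^ (3 / 2 : ℝ) * (m : ℝ) ^ (3 / 2 : ℝ) := by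
        rw [Real.mul_rpow] <;> positivity
    _ ≤ 4 * (m : ℝ) ^ (3 / 2 : ℝ) := by
        gcongr; exact (natCast_rpow_three_halves_le_sq 2).trans_eq (by norm_num)

section RandomSum

variable {Ω : Type*} [MeasurableSpace Ω] {μ : Measure Ω} {X : ℕ → Ω → ℕ} {F H : Ω → ℕ}

theorem measurableSet_randomSum_eq (hX : ∀ i, Measurable (X i)) (hF : Measurable F)
    (hH : Measurable H) (n : ℕ) : MeasurableSet {ω | H ω + ∑ i ∈ range (F ω), X i ω = n} := by
  have hsum : Measurable fun p : ℕ × Ω ↦ ∑ i ∈ range p.1, X i p.2 :=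
    measurable_from_prod_countable_right fun k ↦ Finset.measurable_sum (range k) fun i _ ↦ hX i
  exact (hH.add (hsum.comp (hF.prodMk measurable_id))) (measurableSet_singleton n)

theorem measure_mul_prod_le_measure_randomSum (hindep : iIndepFun X μ)
    (hident : ∀ i, IdentDistrib (X i) (X 0) μ μ)
    (hFH : IndepFun (fun ω ↦ (F ω, H ω)) (fun ω i ↦ X i ω) μ) {f h n : ℕ} {v : ℕ → ℕ}
    (hv : h + ∑ i ∈ range f, v i = n) :
    μ {ω | F ω = f ∧ H ω = h} * ∏ i ∈ range f, μ {ω | X 0 ω = v i}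
      ≤ μ {ω | H ω + ∑ i ∈ range (F ω), X i ω = n} := by
  have hprod : μ {ω | ∀ i ∈ range f, X i ω = v i} = ∏ i ∈ range f, μ {ω | X 0 ω = v i} := by
    have := hindep.measure_inter_preimage_eq_mul (range f)
      (sets := fun i ↦ {v i}) fun i _ ↦ measurableSet_singleton _
    convert this using 1
    · congr 1; ext ω; simp
    · exact prod_congr rfl fun i _ ↦ ((hident i).measure_mem_eq (measurableSet_singleton _)).symm
  have hsplit := hFH.measure_inter_preimage_eq_mul {(f, h)} {x | ∀ i ∈ range f, x i = v i}
    (measurableSet_singleton _) (by measurability)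
  calc μ {ω | F ω = f ∧ H ω = h} * ∏ i ∈ range f, μ {ω | X 0 ω = v i}
      = μ ({ω | F ω = f ∧ H ω = h} ∩ {ω | ∀ i ∈ range f, X i ω = v i}) := by
        rw [← hprod]
        convert hsplit.symm using 3 <;> ext ω <;> simp
    _ ≤ μ {ω | H ω + ∑ i ∈ range (F ω), X i ω = n} := by
        refine measure_mono fun ω ⟨⟨hF, hH⟩, hXv⟩ ↦ ?_
        show H ω + ∑ i ∈ range (F ω), X i ω = n
        rw [hF, hH, sum_congr rfl hXv, hv]

variable [IsProbabilityMeasure μ]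

theorem measure_add_eq_and_mem_le {U R : Ω → ℕ} (hU : Measurable U) (hR : Measurable R)
    (hUR : IndepFun U R μ) (m : ℕ) {B : Set ℕ} {b : ℝ≥0∞}
    (hb : ∀ v ∈ B, μ {ω | U ω = v} ≤ b) :
    μ {ω | U ω + R ω = m ∧ U ω ∈ B} ≤ b := by
  calc μ {ω | U ω + R ω = m ∧ U ω ∈ B}
      = ∫⁻ ω, μ {ω' | U ω' + R ω = m ∧ U ω' ∈ B} ∂μ :=
        hUR.symm.measure_eq_lintegral_measure hR hU (s := {p | p.2 + p.1 = m ∧ p.2 ∈ B})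
          (Set.to_countable _).measurableSet
    _ ≤ ∫⁻ _, b ∂μ := lintegral_mono fun ω ↦ ?_
    _ = b := by simp
  by_cases h : ∃ v ∈ B, v + R ω = m
  · obtain ⟨v, hv, rfl⟩ := h
    exact (measure_mono fun ω' hω' ↦ Nat.add_right_cancel hω'.1).trans (hb v hv)
  · push Not at h
    have hempty : {ω' | U ω' + R ω = m ∧ U ω' ∈ B} = ∅ :=
      Set.eq_empty_of_forall_notMem fun ω' hω' ↦ h _ hω'.2 hω'.1
    simp [hempty]

theorem measure_sum_range_eq_le (hX : ∀ i, Measurable (X i)) (hindep : iIndepFun X μ)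
    (hident : ∀ i, IdentDistrib (X i) (X 0) μ μ) {k m : ℕ} (hk : 0 < k) {b : ℝ≥0∞}
    (hb : ∀ v, m ≤ k * v → μ {ω | X 0 ω = v} ≤ b) :
    μ {ω | ∑ i ∈ range k, X i ω = m} ≤ k * b := by
  have hcover : {ω | ∑ i ∈ range k, X i ω = m} ⊆ ⋃ i ∈ range k,
      {ω | X i ω + (∑ j ∈ (range k).erase i, X j) ω = m ∧ X i ω ∈ {v | m ≤ k * v}} := by
    rintro ω (hω : ∑ i ∈ range k, X i ω = m)
    obtain ⟨i, hi, hle⟩ := exists_le_of_sum_le (nonempty_range_iff.2 hk.ne')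
      (f := fun _ ↦ m) (g := fun i ↦ k * X i ω) (by simp [← mul_sum, hω])
    refine Set.mem_biUnion hi ⟨?_, hle⟩
    rw [Finset.sum_apply, add_sum_erase _ (fun j ↦ X j ω) hi]
    exact hω
  calc μ {ω | ∑ i ∈ range k, X i ω = m}
      ≤ ∑ i ∈ range k,
          μ {ω | X i ω + (∑ j ∈ (range k).erase i, X j) ω = m ∧ X i ω ∈ {v | m ≤ k * v}} :=
        (measure_mono hcover).trans (measure_biUnion_finset_le _ _)
    _ ≤ ∑ _i ∈ range k, b := sum_le_sum fun i _ ↦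
        measure_add_eq_and_mem_le (hX i) (by fun_prop)
          (hindep.indepFun_finsetSum_of_notMem hX (notMem_erase i _)).symm m
          fun v hv ↦ (hident i).measure_mem_eq (measurableSet_singleton v) ▸ hb v hv
    _ = k * b := by simp

theorem rpow_mul_measure_sum_range_eq_le (hX : ∀ i, Measurable (X i)) (hindep : iIndepFun X μ)
    (hident : ∀ i, IdentDistrib (X i) (X 0) μ μ) {C : ℝ}
    (hC : ∀ v : ℕ, (v : ℝ) ^ (3 / 2 : ℝ) * (μ {ω | X 0 ω = v}).toReal ≤ C)
    {k m : ℕ} (hk : 0 < k) (hm : 0 < m) :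
    (m : ℝ) ^ (3 / 2 : ℝ) * (μ {ω | ∑ i ∈ range k, X i ω = m}).toReal ≤ C * k ^ 3 := by
  have hC0 : 0 ≤ C := by simpa [Real.zero_rpow] using hC 0
  have hm₀ : 0 < (m : ℝ) ^ (3 / 2 : ℝ) := by positivity
  have hb : ∀ v, m ≤ k * v → μ {ω | X 0 ω = v} ≤ ENNReal.ofReal (C * k ^ 2 / m ^ (3 / 2 : ℝ)) := by
    intro v hv
    have hmv : (m : ℝ) ^ (3 / 2 : ℝ) ≤ k ^ 2 * v ^ (3 / 2 : ℝ) :=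
      calc (m : ℝ) ^ (3 / 2 : ℝ) ≤ ((k : ℝ) * v) ^ (3 / 2 : ℝ) := by gcongr; exact_mod_cast hv
        _ = (k : ℝ) ^ (3 / 2 : ℝ) * v ^ (3 / 2 : ℝ) := by rw [Real.mul_rpow] <;> positivity
        _ ≤ k ^ 2 * v ^ (3 / 2 : ℝ) := by gcongr; exact natCast_rpow_three_halves_le_sq k
    rw [← ENNReal.ofReal_toReal (measure_ne_top μ _)]
    refine ENNReal.ofReal_le_ofReal ((le_div_iff₀ hm₀).2 ?_)
    calc (μ {ω | X 0 ω = v}).toReal * m ^ (3 / 2 : ℝ)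
        ≤ (μ {ω | X 0 ω = v}).toReal * (k ^ 2 * v ^ (3 / 2 : ℝ)) := by gcongr
      _ = k ^ 2 * (v ^ (3 / 2 : ℝ) * (μ {ω | X 0 ω = v}).toReal) := by ring
      _ ≤ C * k ^ 2 := by rw [mul_comm C]; gcongr; exact hC v
  have hS : (μ {ω | ∑ i ∈ range k, X i ω = m}).toReal ≤ k * (C * k ^ 2 / m ^ (3 / 2 : ℝ)) := by
    refine ENNReal.toReal_le_of_le_ofReal (by positivity) ?_
    rw [ENNReal.ofReal_mul (Nat.cast_nonneg k), ENNReal.ofReal_natCast]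
    exact measure_sum_range_eq_le hX hindep hident hk hb
  calc (m : ℝ) ^ (3 / 2 : ℝ) * (μ {ω | ∑ i ∈ range k, X i ω = m}).toReal
      ≤ m ^ (3 / 2 : ℝ) * (k * (C * k ^ 2 / m ^ (3 / 2 : ℝ))) := by gcongr
    _ = C * k ^ 3 := by field_simp

theorem setLIntegral_randomSum_eq (hX : ∀ i, Measurable (X i)) (hF : Measurable F)
    (hH : Measurable H) (hFH : IndepFun (fun ω ↦ (F ω, H ω)) (fun ω i ↦ X i ω) μ) (n : ℕ) :
    ∫⁻ ω in {ω | H ω + ∑ i ∈ range (F ω), X i ω = n}, (F ω : ℝ≥0∞) ∂μ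
      = ∫⁻ ω, F ω * μ {ω' | H ω + ∑ i ∈ range (F ω), X i ω' = n} ∂μ := by
  let G : ℕ × ℕ → (ℕ → ℕ) → ℝ≥0∞ := fun q x ↦
    if q.2 + ∑ i ∈ range q.1, x i = n then q.1 else 0
  have hG : Measurable (Function.uncurry G) :=
    measurable_from_prod_countable_right fun q ↦ show Measurable (G q) from
      Measurable.ite (measurableSet_eq_fun (measurable_const.add
        (Finset.measurable_sum (range q.1) fun i _ ↦ measurable_pi_apply i)) measurable_const)
        measurable_const
        measurable_const
  rw [← lintegral_indicator (measurableSet_randomSum_eq hX hF hH n)]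
  calc _ = ∫⁻ ω, G (F ω, H ω) (fun i ↦ X i ω) ∂μ := by
        congr; ext ω; simp [G, Set.indicator_apply]
    _ = ∫⁻ ω, ∫⁻ ω', G (F ω, H ω) (fun i ↦ X i ω') ∂μ ∂μ :=
        hFH.lintegral_comp_eq_lintegral_lintegral (by fun_prop) (by fun_prop) hG
    _ = _ := lintegral_congr fun ω ↦ ?_
  rw [← lintegral_indicator_const (measurableSet_randomSum_eq (F := fun _ ↦ F ω)
    (H := fun _ ↦ H ω) hX measurable_const measurable_const n)]
  simp [G, Set.indicator_apply]

theorem rpow_mul_mul_measure_add_sum_range_eq_le (hX : ∀ i, Measurable (X i))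
    (hindep : iIndepFun X μ) (hident : ∀ i, IdentDistrib (X i) (X 0) μ μ) {C : ℝ}
    (hC : ∀ v : ℕ, (v : ℝ) ^ (3 / 2 : ℝ) * (μ {ω | X 0 ω = v}).toReal ≤ C)
    {t : ℝ} (ht : 0 < t) (n k h : ℕ) :
    (n : ℝ) ^ (3 / 2 : ℝ) * (k * (μ {ω | h + ∑ i ∈ range k, X i ω = n}).toReal)
      ≤ (4 * 3 ! / t ^ 3 + 4 * C * 4 ! / t ^ 4) * Real.exp (t * (k + h)) := by
  have hC0 : 0 ≤ C := by simpa [Real.zero_rpow] using hC 0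
  rcases k.eq_zero_or_pos with rfl | hk
  · simp only [CharP.cast_eq_zero, zero_mul, mul_zero]; positivity
  set p := (μ {ω | h + ∑ i ∈ range k, X i ω = n}).toReal
  rw [add_mul]
  rcases le_or_gt n (2 * h) with hnh | hnh
  · have hp : p ≤ 1 := ENNReal.toReal_le_of_le_ofReal zero_le_one (by simp [prob_le_one])
    calc (n : ℝ) ^ (3 / 2 : ℝ) * (k * p) ≤ (n : ℝ) ^ (3 / 2 : ℝ) * k := by
          gcongr; exact mul_le_of_le_one_right k.cast_nonneg hp
      _ ≤ 4 * 3 ! / t ^ 3 * Real.exp (t * (k + h)) := natCast_rpow_mul_le_exp_of_le_two_mul hnh ht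
      _ ≤ _ := le_add_of_nonneg_right (by positivity)
  · have hset : {ω | h + ∑ i ∈ range k, X i ω = n} = {ω | ∑ i ∈ range k, X i ω = n - h} := by
      ext ω; simp only [Set.mem_ofPred_eq]; omega
    have hS := rpow_mul_measure_sum_range_eq_le hX hindep hident hC hk (by omega : 0 < n - h)
    rw [← hset] at hS
    calc (n : ℝ) ^ (3 / 2 : ℝ) * (k * p) ≤ 4 * ((n - h : ℕ) : ℝ) ^ (3 / 2 : ℝ) * (k * p) := by
          gcongr; exact natCast_rpow_le_four_mul_of_le_two_mul (by omega)
      _ = 4 * k * (((n - h : ℕ) : ℝ) ^ (3 / 2 : ℝ) * p) := by ring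
      _ ≤ 4 * k * (C * k ^ 3) := by gcongr
      _ = 4 * C * k ^ 4 := by ring
      _ ≤ 4 * C * (4 ! / t ^ 4 * Real.exp (t * (k + h))) := by
          gcongr
          calc (k : ℝ) ^ 4 ≤ ((k : ℝ) + h) ^ 4 := by
                gcongr; exact le_add_of_nonneg_right h.cast_nonneg
            _ ≤ _ := pow_le_factorial_div_pow_mul_exp (by positivity) ht 4
      _ = 4 * C * 4 ! / t ^ 4 * Real.exp (t * (k + h)) := by ring
      _ ≤ _ := le_add_of_nonneg_left (by positivity)

theorem exists_rpow_mul_setIntegral_randomSum_le (hX : ∀ i, Measurable (X i))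
    (hindep : iIndepFun X μ) (hident : ∀ i, IdentDistrib (X i) (X 0) μ μ)
    (hF : Measurable F) (hH : Measurable H)
    (hFH : IndepFun (fun ω ↦ (F ω, H ω)) (fun ω i ↦ X i ω) μ) {C : ℝ}
    (hC : ∀ v : ℕ, (v : ℝ) ^ (3 / 2 : ℝ) * (μ {ω | X 0 ω = v}).toReal ≤ C)
    {t : ℝ} (ht : 0 < t) (hint : Integrable (fun ω ↦ Real.exp (t * ((F ω : ℝ) + H ω))) μ) :
    ∃ K, ∀ n : ℕ,
      (n : ℝ) ^ (3 / 2 : ℝ) * ∫ ω in {ω | H ω + ∑ i ∈ range (F ω), X i ω = n}, (F ω : ℝ) ∂μ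
        ≤ K := by
  set c := 4 * 3 ! / t ^ 3 + 4 * C * 4 ! / t ^ 4
  have hc : 0 ≤ c := by
    have hC0 : 0 ≤ C := by simpa [Real.zero_rpow] using hC 0
    positivity
  refine ⟨c * ∫ ω, Real.exp (t * ((F ω : ℝ) + H ω)) ∂μ, fun n ↦ ?_⟩
  have hlin : ENNReal.ofReal ((n : ℝ) ^ (3 / 2 : ℝ))
        * ∫⁻ ω in {ω | H ω + ∑ i ∈ range (F ω), X i ω = n}, (F ω : ℝ≥0∞) ∂μ
      ≤ ENNReal.ofReal (c * ∫ ω, Real.exp (t * ((F ω : ℝ) + H ω)) ∂μ) := by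
    rw [setLIntegral_randomSum_eq hX hF hH hFH, ← lintegral_const_mul' _ _ ENNReal.ofReal_ne_top,
      ← integral_const_mul, ofReal_integral_eq_lintegral_ofReal (hint.const_mul c)
        (ae_of_all _ fun ω ↦ by positivity)]
    refine lintegral_mono fun ω ↦ ?_
    rw [← ENNReal.ofReal_natCast, ← ENNReal.ofReal_toReal (measure_ne_top μ _),
      ← ENNReal.ofReal_mul (by positivity), ← ENNReal.ofReal_mul (by positivity)]
    exact ENNReal.ofReal_le_ofReal
      (rpow_mul_mul_measure_add_sum_range_eq_le hX hindep hident hC ht n (F ω) (H ω))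
  rw [integral_eq_lintegral_of_nonneg_ae (ae_of_all _ fun ω ↦ by positivity) (by fun_prop)]
  simp only [ENNReal.ofReal_natCast]
  rw [← ENNReal.toReal_ofReal (by positivity : (0 : ℝ) ≤ (n : ℝ) ^ (3 / 2 : ℝ)),
    ← ENNReal.toReal_mul]
  exact ENNReal.toReal_le_of_le_ofReal (by positivity) hlin

theorem exists_pos_le_rpow_mul_measure_randomSum (hindep : iIndepFun X μ)
    (hident : ∀ i, IdentDistrib (X i) (X 0) μ μ)
    (hFH : IndepFun (fun ω ↦ (F ω, H ω)) (fun ω i ↦ X i ω) μ) (hFpos : 0 < μ {ω | 1 ≤ F ω})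
    {c : ℝ} (hc : 0 < c) {N₀ : ℕ}
    (hlow : ∀ v, N₀ ≤ v → c ≤ (v : ℝ) ^ (3 / 2 : ℝ) * (μ {ω | X 0 ω = v}).toReal) :
    ∃ c₁ > 0, ∀ᶠ n : ℕ in atTop,
      c₁ ≤ (n : ℝ) ^ (3 / 2 : ℝ) * (μ {ω | H ω + ∑ i ∈ range (F ω), X i ω = n}).toReal := by
  obtain ⟨⟨j, h⟩, hq⟩ : ∃ q : ℕ × ℕ, 0 < μ {ω | F ω = q.1 + 1 ∧ H ω = q.2} := by
    refine exists_measure_pos_of_not_measure_iUnion_null (hFpos.trans_le (measure_mono ?_)).ne'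
    intro ω (hω : 1 ≤ F ω)
    exact Set.mem_iUnion.2 ⟨(F ω - 1, H ω), (Nat.sub_add_cancel hω).symm, rfl⟩
  set q := (μ {ω | F ω = j + 1 ∧ H ω = h}).toReal
  set p₀ := (μ {ω | X 0 ω = N₀}).toReal
  have hq₀ : 0 < q := ENNReal.toReal_pos hq.ne' (measure_ne_top μ _)
  have hp₀ : 0 < p₀ := pos_of_mul_pos_right (hc.trans_le (hlow N₀ le_rfl)) (by positivity)
  refine ⟨q * p₀ ^ j * c, by positivity, eventually_atTop.2 ⟨h + j * N₀ + N₀, fun n hn ↦ ?_⟩⟩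
  set m := n - h - j * N₀
  have hv : h + ∑ i ∈ range (j + 1), (fun i ↦ if i < j then N₀ else m) i = n := by
    rw [sum_range_succ, sum_congr rfl fun i hi ↦ if_pos (mem_range.1 hi)]
    simp only [sum_const, card_range, smul_eq_mul, lt_irrefl, if_false]
    omega
  have hA := measure_mul_prod_le_measure_randomSum hindep hident hFH hv
  rw [prod_range_succ, prod_congr rfl fun i hi ↦ by rw [if_pos (mem_range.1 hi)],
    prod_const, card_range, if_neg (lt_irrefl j)] at hA
  have hAr := ENNReal.toReal_mono (measure_ne_top μ _) hA
  rw [ENNReal.toReal_mul, ENNReal.toReal_mul, ENNReal.toReal_pow] at hAr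
  have hlow_m : c ≤ (n : ℝ) ^ (3 / 2 : ℝ) * (μ {ω | X 0 ω = m}).toReal :=
    (hlow m (by omega)).trans (by gcongr; omega)
  calc q * p₀ ^ j * c ≤ q * p₀ ^ j * ((n : ℝ) ^ (3 / 2 : ℝ) * (μ {ω | X 0 ω = m}).toReal) := by
        gcongr
    _ = (n : ℝ) ^ (3 / 2 : ℝ) * (q * p₀ ^ j * (μ {ω | X 0 ω = m}).toReal) := by ring
    _ ≤ _ := by gcongr; exact (mul_assoc _ _ _).trans_le hAr

end RandomSum

/-- Let `(X_i)` be iid `ℕ`-valued with `n^{3/2}·P(X₁ = n) → c > 0`, let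
`(F, H)` be independent of the sequence with finite exponential moments and
`P(F ≥ 1) > 0`. Set `S := H + Σ_{i=1}^{F} X_i`. Then the conditional
expectation `E[F | S = n]` remains bounded as `n → ∞`. -/
theorem conditional_expectation_F_bounded
    {Ω : Type*} [MeasurableSpace Ω] (P : Measure Ω) [IsProbabilityMeasure P]
    (X : ℕ → Ω → ℕ) (hXm : ∀ i, Measurable (X i))
    (hXindep : iIndepFun X P)
    (hXid : ∀ i, IdentDistrib (X i) (X 0) P P)
    (c : ℝ) (hc : 0 < c)
    (hXtail : Tendsto
      (fun n : ℕ => (n : ℝ) ^ ((3 : ℝ) / 2) * (P {ω | X 0 ω = n}).toReal)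
      atTop (nhds c))
    (F H : Ω → ℕ) (hFm : Measurable F) (hHm : Measurable H)
    (hFH : IndepFun (fun ω => (F ω, H ω)) (fun ω i => X i ω) P)
    (hexp : ∃ t : ℝ, 0 < t ∧
      Integrable (fun ω => Real.exp (t * ((F ω : ℝ) + (H ω : ℝ)))) P)
    (hFpos : 0 < P {ω | 1 ≤ F ω}) :
    ∃ B : ℝ, ∃ N : ℕ, ∀ n : ℕ, N ≤ n →
      0 < P {ω | H ω + ∑ i ∈ Finset.range (F ω), X i ω = n} ∧
      (∫ ω, (F ω : ℝ)
          ∂(ProbabilityTheory.cond P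
            {ω | H ω + ∑ i ∈ Finset.range (F ω), X i ω = n})) ≤ B := by
  obtain ⟨t, ht, hint⟩ := hexp
  obtain ⟨C, hC⟩ := hXtail.bddAbove_range
  obtain ⟨K, hK⟩ := exists_rpow_mul_setIntegral_randomSum_le hXm hXindep hXid hFm hHm hFH
    (fun v ↦ hC ⟨v, rfl⟩) ht hint
  obtain ⟨N₀, hN₀⟩ :=
    eventually_atTop.1 (hXtail.eventually (eventually_ge_nhds (half_lt_self hc)))
  obtain ⟨c₁, hc₁, hlow⟩ :=
    exists_pos_le_rpow_mul_measure_randomSum hXindep hXid hFH hFpos (half_pos hc) hN₀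
  obtain ⟨N, hN⟩ := eventually_atTop.1 hlow
  refine ⟨K / c₁, N, fun n hn ↦ ?_⟩
  have hA := hN n hn
  have hPA : 0 < (P {ω | H ω + ∑ i ∈ range (F ω), X i ω = n}).toReal :=
    pos_of_mul_pos_right (hc₁.trans_le hA) (by positivity)
  have hn₀ : 0 < (n : ℝ) ^ (3 / 2 : ℝ) := pos_of_mul_pos_left (hc₁.trans_le hA) hPA.le
  refine ⟨(ENNReal.toReal_pos_iff.1 hPA).1, ?_⟩
  rw [ProbabilityTheory.cond, integral_smul_measure, ENNReal.toReal_inv, smul_eq_mul,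
    inv_mul_eq_div, ← mul_div_mul_left _ _ hn₀.ne']
  exact div_le_div₀ ((by positivity : (0 : ℝ) ≤ _).trans (hK n)) (hK n) hc₁ hA
end
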